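/- arXiv:1702.00852 — 13 statements merged into one kernel-verified Lean document; each statement's English description precedes it below -/
import Mathlib

section
/- Let f ∈ H and let f̂ ∈ H satisfy P_S f̂ = P_S f. Then f̂ minimizes ‖g − P_T g‖ over all g ∈ H with P_S g = P_S f (i.e., f̂ solves the sample consistent reconstruction problem inf ‖g − P_T g‖ subject to P_S g = P_S f) if and only if P_{S⊥} P_{T⊥} f̂ = 0. -/
/-!
Write `Q = P_{T⊥}`, so that the objective is `‖Q g‖` and the feasible points are `fhat - u` with
`u ∈ S⊥`. Since `Q` is linear, `Q fhat` must be a point of least norm in the affine set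
`Q fhat - Q(S⊥)`, i.e. it must be orthogonal to `Q(S⊥)`. As `Q fhat` lies in `T⊥` and `Q` is
self-adjoint, `⟪Q fhat, Q u⟫ = ⟪Q fhat, u⟫`, so this says exactly that `Q fhat ∈ S⊥⊥`, i.e.
`P_{S⊥} Q fhat = 0`.
-/

open scoped InnerProductSpace

namespace Submodule

variable {𝕜 E : Type*} [RCLike 𝕜] [NormedAddCommGroup E] [InnerProductSpace 𝕜 E]

theorem forall_norm_le_norm_sub_iff_mem_orthogonal (V : Submodule 𝕜 E) (x : E) :
    (∀ v ∈ V, ‖x‖ ≤ ‖x - v‖) ↔ x ∈ Vᗮ := by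
  have hbdd : BddBelow (Set.range fun v : V ↦ ‖x - v‖) := ⟨0, by simp [lowerBounds]⟩
  have hinf : (∀ v ∈ V, ‖x‖ ≤ ‖x - v‖) ↔ ‖x - 0‖ = ⨅ v : V, ‖x - v‖ := by
    refine ⟨fun h ↦ le_antisymm ?_ ?_, fun h v hv ↦ ?_⟩
    · exact le_ciInf fun v ↦ by simpa using h v v.2
    · simpa using ciInf_le hbdd 0
    · simpa [← h] using ciInf_le hbdd ⟨v, hv⟩
  rw [hinf, V.norm_eq_iInf_iff_inner_eq_zero V.zero_mem, mem_orthogonal', sub_zero]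

theorem starProjection_eq_starProjection_iff (K : Submodule 𝕜 E) [K.HasOrthogonalProjection]
    {a b : E} : K.starProjection a = K.starProjection b ↔ a - b ∈ Kᗮ := by
  rw [← sub_eq_zero, ← map_sub, ← ker_starProjection, LinearMap.mem_ker]
  rfl

theorem mem_orthogonal_map_starProjection_iff {U : Submodule 𝕜 E} [U.HasOrthogonalProjection]
    (W : Submodule 𝕜 E) {x : E} (hx : x ∈ U) :
    x ∈ (W.map (U.starProjection : E →ₗ[𝕜] E))ᗮ ↔ x ∈ Wᗮ := by
  simp only [mem_orthogonal', mem_map, ContinuousLinearMap.coe_coe, forall_exists_index, and_imp,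
    forall_apply_eq_imp_iff₂]
  refine forall₂_congr fun w _ ↦ ?_
  rw [← inner_starProjection_left_eq_right, starProjection_eq_self_iff.2 hx]

end Submodule

open Submodule

theorem stmt_0_general {𝕜 H : Type*} [RCLike 𝕜] [NormedAddCommGroup H] [InnerProductSpace 𝕜 H]
    (S T : Submodule 𝕜 H)
    [S.HasOrthogonalProjection] [T.HasOrthogonalProjection]
    (f fhat : H) (hconsist : (S.orthogonalProjectionOnto fhat : H) = (S.orthogonalProjectionOnto f : H)) :
    (∀ g : H, (S.orthogonalProjectionOnto g : H) = (S.orthogonalProjectionOnto f : H) →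
        ‖fhat - (T.orthogonalProjectionOnto fhat : H)‖ ≤ ‖g - (T.orthogonalProjectionOnto g : H)‖) ↔
      (Sᗮ.orthogonalProjectionOnto (fhat - (T.orthogonalProjectionOnto fhat : H)) : H) = 0 := by
  simp only [coe_orthogonalProjectionOnto_apply, ← starProjection_orthogonal_val] at hconsist ⊢
  set Q := Tᗮ.starProjection
  calc (∀ g, S.starProjection g = S.starProjection f → ‖Q fhat‖ ≤ ‖Q g‖)
      ↔ ∀ u ∈ Sᗮ, ‖Q fhat‖ ≤ ‖Q fhat - Q u‖ := by
        simp only [← hconsist, starProjection_eq_starProjection_iff, ← map_sub]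
        refine ⟨fun h u hu ↦ h _ (by simpa), fun h g hg ↦ ?_⟩
        simpa using h (fhat - g) (by rwa [← neg_mem_iff, neg_sub])
    _ ↔ Q fhat ∈ (Sᗮ.map (Q : H →ₗ[𝕜] H))ᗮ := by
        simp only [← forall_norm_le_norm_sub_iff_mem_orthogonal, mem_map, forall_exists_index,
          and_imp, forall_apply_eq_imp_iff₂, ContinuousLinearMap.coe_coe]
    _ ↔ Q fhat ∈ Sᗮᗮ := mem_orthogonal_map_starProjection_iff _ (starProjection_apply_mem _ _)
    _ ↔ Sᗮ.starProjection (Q fhat) = 0 := by rw [← ker_starProjection]; rfl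

/-- Let `f ∈ H` and let `fhat ∈ H` satisfy `P_S fhat = P_S f`. Then `fhat` minimizes
`‖g − P_T g‖` over all `g ∈ H` with `P_S g = P_S f` (i.e. `fhat` solves the sample consistent
reconstruction problem) if and only if `P_{S⊥} P_{T⊥} fhat = 0`. -/
theorem stmt_0 {𝕜 H : Type*} [RCLike 𝕜] [NormedAddCommGroup H] [InnerProductSpace 𝕜 H]
    [CompleteSpace H] (S T : Submodule 𝕜 H)
    [S.HasOrthogonalProjection] [T.HasOrthogonalProjection]
    (f fhat : H) (hconsist : (S.orthogonalProjectionOnto fhat : H) = (S.orthogonalProjectionOnto f : H)) :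
    (∀ g : H, (S.orthogonalProjectionOnto g : H) = (S.orthogonalProjectionOnto f : H) →
        ‖fhat - (T.orthogonalProjectionOnto fhat : H)‖ ≤ ‖g - (T.orthogonalProjectionOnto g : H)‖) ↔
      (Sᗮ.orthogonalProjectionOnto (fhat - (T.orthogonalProjectionOnto fhat : H)) : H) = 0 :=
  stmt_0_general S T f fhat hconsist
end

section
/- Let f ∈ H and let f̂ be a sample consistent reconstruction of f. Then f̂ − P_T f̂ belongs to the closed subspace S ∩ T⊥, and the orthogonal decomposition f̂ = P_T f̂ + P_{S∩T⊥} f holds, where P_{S∩T⊥} is the orthogonal projection onto S ∩ T⊥. -/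
/-!
Put `w = f̂ - P_T f̂`. It lies in `T⊥` always, and in `S` because its component in `S⊥` vanishes;
so `w ∈ S ∩ T⊥`. Consistency gives `f - f̂ ∈ S⊥`, while `P_T f̂ ∈ T = T⊥⊥`, hence
`f - w = (f - f̂) + P_T f̂ ∈ S⊥ + T⊥⊥ ⊆ (S ∩ T⊥)⊥`, which characterises `w` as `P_{S∩T⊥} f`.
-/

namespace Submodule

variable {𝕜 E : Type*} [RCLike 𝕜] [NormedAddCommGroup E] [InnerProductSpace 𝕜 E]

lemma mem_of_orthogonalProjectionOnto_orthogonal_eq_zero {K : Submodule 𝕜 E}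
    [K.HasOrthogonalProjection] {v : E} (h : (Kᗮ.orthogonalProjectionOnto v : E) = 0) : v ∈ K := by
  rw [← K.orthogonal_orthogonal, ← orthogonalProjectionOnto_eq_zero_iff]
  exact Subtype.ext h

lemma sub_mem_orthogonal_of_orthogonalProjectionOnto_eq {K : Submodule 𝕜 E}
    [K.HasOrthogonalProjection] {u v : E}
    (h : (K.orthogonalProjectionOnto u : E) = K.orthogonalProjectionOnto v) : u - v ∈ Kᗮ := by
  rw [← orthogonalProjectionOnto_eq_zero_iff, map_sub, Subtype.ext h, sub_self]

lemma sup_orthogonal_le_orthogonal_inf (K L : Submodule 𝕜 E) : Kᗮ ⊔ Lᗮ ≤ (K ⊓ L)ᗮ :=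
  sup_le (orthogonal_le inf_le_left) (orthogonal_le inf_le_right)

end Submodule

open Submodule in
theorem stmt_2_general {𝕜 H : Type*} [RCLike 𝕜] [NormedAddCommGroup H] [InnerProductSpace 𝕜 H]
    (S T : Submodule 𝕜 H)
    [Submodule.HasOrthogonalProjection S] [Submodule.HasOrthogonalProjection T]
    [Submodule.HasOrthogonalProjection (S ⊓ Tᗮ)]
    (f fhat : H)
    (hconsist : (Submodule.orthogonalProjectionOnto S fhat : H) = (Submodule.orthogonalProjectionOnto S f : H))
    (hmin : (Submodule.orthogonalProjectionOnto Sᗮ (fhat - (Submodule.orthogonalProjectionOnto T fhat : H)) : H) = 0) :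
    fhat - (Submodule.orthogonalProjectionOnto T fhat : H) ∈ S ⊓ Tᗮ ∧
      fhat = (Submodule.orthogonalProjectionOnto T fhat : H) + (Submodule.orthogonalProjectionOnto (S ⊓ Tᗮ) f : H) := by
  set w := fhat - (T.orthogonalProjectionOnto fhat : H) with hw
  have hwST : w ∈ S ⊓ Tᗮ :=
    ⟨mem_of_orthogonalProjectionOnto_orthogonal_eq_zero hmin, T.sub_starProjection_mem_orthogonal fhat⟩
  have hfw : f - w ∈ (S ⊓ Tᗮ)ᗮ := by
    have hdecomp : f - w = (f - fhat) + (T.orthogonalProjectionOnto fhat : H) := by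
      rw [hw]; abel
    rw [hdecomp]
    exact sup_orthogonal_le_orthogonal_inf S Tᗮ <| add_mem_sup
      (sub_mem_orthogonal_of_orthogonalProjectionOnto_eq hconsist.symm)
      (T.le_orthogonal_orthogonal (T.orthogonalProjectionOnto fhat).2)
  have hproj : ((S ⊓ Tᗮ).orthogonalProjectionOnto f : H) = w :=
    eq_starProjection_of_mem_orthogonal hwST hfw
  exact ⟨hwST, by rw [hproj, hw, add_sub_cancel]⟩

/-- If `fhat` is a sample consistent reconstruction of `f` (i.e. `P_S fhat = P_S f`
and `P_{S⊥} P_{T⊥} fhat = 0`), then `fhat − P_T fhat ∈ S ∩ T⊥` and the orthogonal decomposition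
`fhat = P_T fhat + P_{S∩T⊥} f` holds. -/
theorem stmt_2 {𝕜 H : Type*} [RCLike 𝕜] [NormedAddCommGroup H] [InnerProductSpace 𝕜 H]
    [CompleteSpace H] (S T : Submodule 𝕜 H)
    [Submodule.HasOrthogonalProjection S] [Submodule.HasOrthogonalProjection T]
    [Submodule.HasOrthogonalProjection (S ⊓ Tᗮ)]
    (f fhat : H)
    (hconsist : (Submodule.orthogonalProjectionOnto S fhat : H) = (Submodule.orthogonalProjectionOnto S f : H))
    (hmin : (Submodule.orthogonalProjectionOnto Sᗮ (fhat - (Submodule.orthogonalProjectionOnto T fhat : H)) : H) = 0) :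
    fhat - (Submodule.orthogonalProjectionOnto T fhat : H) ∈ S ⊓ Tᗮ ∧
      fhat = (Submodule.orthogonalProjectionOnto T fhat : H) + (Submodule.orthogonalProjectionOnto (S ⊓ Tᗮ) f : H) :=
  stmt_2_general S T f fhat hconsist hmin
end

section
/- For every f ∈ H, the shortest distance between the sample consistent plane P_S f + S⊥ and the guiding subspace T equals the norm of the projection of f onto S ∩ T⊥; that is, inf{‖(P_S f + x) − t‖ : x ∈ S⊥, t ∈ T} = ‖P_{S∩T⊥} f‖. -/
/-!
The plane `P_S f + S⊥` meets `T` at distance `dist (P_S f) (S⊥ + T)`, and the closure of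
`S⊥ + T` is `(S ∩ T⊥)⊥`. The distance from a point to the orthogonal complement of a subspace
`K` is the norm of its projection onto `K`, and since `S ∩ T⊥ ≤ S`, projecting `P_S f` onto
`S ∩ T⊥` is the same as projecting `f`.
-/

open Metric

theorem sInf_norm_add_sub_eq_infDist_sup {R E : Type*} [Ring R] [SeminormedAddCommGroup E]
    [Module R E] (U V : Submodule R E) (v : E) :
    sInf {d : ℝ | ∃ x ∈ U, ∃ t ∈ V, d = ‖(v + x) - t‖} = infDist v (U ⊔ V : Submodule R E) := by
  have hset : {d : ℝ | ∃ x ∈ U, ∃ t ∈ V, d = ‖(v + x) - t‖} =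
      Set.range fun w : ↥(U ⊔ V) => dist v (w : E) := by
    ext d
    constructor
    · rintro ⟨x, hx, t, ht, rfl⟩
      refine ⟨⟨t - x, sub_mem (Submodule.mem_sup_right ht) (Submodule.mem_sup_left hx)⟩, ?_⟩
      simp only [dist_eq_norm, sub_sub_eq_add_sub]
    · rintro ⟨⟨w, hw⟩, rfl⟩
      obtain ⟨x, hx, t, ht, rfl⟩ := Submodule.mem_sup.mp hw
      refine ⟨-x, neg_mem hx, t, ht, ?_⟩
      simp only [dist_eq_norm, sub_add_eq_sub_sub, sub_eq_add_neg v x]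
  rw [hset, infDist_eq_iInf]
  rfl

section InnerProductSpace

variable {𝕜 E : Type*} [RCLike 𝕜] [NormedAddCommGroup E] [InnerProductSpace 𝕜 E]

theorem infDist_orthogonal_eq_norm_starProjection (K : Submodule 𝕜 E)
    [K.HasOrthogonalProjection] (v : E) :
    infDist v (Kᗮ : Set E) = ‖K.starProjection v‖ := by
  calc infDist v (Kᗮ : Set E) = ‖v - Kᗮ.starProjection v‖ := by
        rw [Submodule.starProjection_minimal, infDist_eq_iInf]
        simp only [dist_eq_norm]
        rfl
    _ = ‖K.starProjection v‖ := by
        rw [Submodule.starProjection_orthogonal_val, sub_sub_cancel]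

theorem infDist_eq_norm_starProjection_of_orthogonal_eq [CompleteSpace E]
    {W K : Submodule 𝕜 E} [K.HasOrthogonalProjection] (h : Wᗮ = K) (v : E) :
    infDist v (W : Set E) = ‖K.starProjection v‖ := by
  rw [← infDist_closure, ← Submodule.topologicalClosure_coe,
    ← W.orthogonal_orthogonal_eq_closure, h, infDist_orthogonal_eq_norm_starProjection]

end InnerProductSpace

theorem stmt_4_general {𝕜 H : Type*} [RCLike 𝕜] [NormedAddCommGroup H] [InnerProductSpace 𝕜 H]
    [CompleteSpace H] (S T : Submodule 𝕜 H)
    [Submodule.HasOrthogonalProjection S]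
    [Submodule.HasOrthogonalProjection (S ⊓ Tᗮ)] (f : H) :
    sInf {d : ℝ | ∃ x ∈ Sᗮ, ∃ t ∈ T, d = ‖((S.orthogonalProjectionOnto f : H) + x) - t‖} =
      ‖((S ⊓ Tᗮ).orthogonalProjectionOnto f : H)‖ := by
  have hperp : (Sᗮ ⊔ T)ᗮ = S ⊓ Tᗮ := by
    rw [← Submodule.inf_orthogonal, Submodule.orthogonal_orthogonal]
  rw [sInf_norm_add_sub_eq_infDist_sup, infDist_eq_norm_starProjection_of_orthogonal_eq hperp,
    Submodule.coe_orthogonalProjectionOnto_apply, Submodule.coe_orthogonalProjectionOnto_apply,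
    ← ContinuousLinearMap.comp_apply,
    Submodule.starProjection_comp_starProjection_of_le inf_le_left]

/-- For every `f ∈ H`, the shortest distance between the sample consistent plane
`P_S f + S⊥` and the guiding subspace `T` equals `‖P_{S∩T⊥} f‖`:
`inf {‖(P_S f + x) − t‖ : x ∈ S⊥, t ∈ T} = ‖P_{S∩T⊥} f‖`. -/
theorem stmt_4 {𝕜 H : Type*} [RCLike 𝕜] [NormedAddCommGroup H] [InnerProductSpace 𝕜 H]
    [CompleteSpace H] (S T : Submodule 𝕜 H)
    [Submodule.HasOrthogonalProjection S] [Submodule.HasOrthogonalProjection T]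
    [Submodule.HasOrthogonalProjection (S ⊓ Tᗮ)] (f : H) :
    sInf {d : ℝ | ∃ x ∈ Sᗮ, ∃ t ∈ T, d = ‖((S.orthogonalProjectionOnto f : H) + x) - t‖} =
      ‖((S ⊓ Tᗮ).orthogonalProjectionOnto f : H)‖ :=
  stmt_4_general S T f
end

section
/- Let f ∈ H. If f̂₁ and f̂₂ are both sample consistent reconstructions of f, then f̂₁ − f̂₂ ∈ S⊥ ∩ T; conversely, if f̂ is a sample consistent reconstruction of f and w ∈ S⊥ ∩ T, then f̂ + w is also a sample consistent reconstruction of f. Consequently, the set of all sample consistent reconstructions of f is the plane f̂ + (S⊥ ∩ T), and the sample consistent reconstruction of every f ∈ H is unique (whenever it exists) if and only if S⊥ ∩ T = {0}. -/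
/-- `fhat` is a sample consistent reconstruction of `f`: `P_S fhat = P_S f` and
`P_{S⊥} P_{T⊥} fhat = 0`. -/
def IsSCR {𝕜 H : Type*} [RCLike 𝕜] [NormedAddCommGroup H] [InnerProductSpace 𝕜 H]
    (S T : Submodule 𝕜 H) [Submodule.HasOrthogonalProjection S] [Submodule.HasOrthogonalProjection T]
    (f fhat : H) : Prop :=
  (Submodule.orthogonalProjectionOnto S fhat : H) = (Submodule.orthogonalProjectionOnto S f : H) ∧
    (Submodule.orthogonalProjectionOnto Sᗮ (fhat - (Submodule.orthogonalProjectionOnto T fhat : H)) : H) = 0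

/-!
Both defining conditions of a sample consistent reconstruction `g` of `f` are affine in `g`:
they say `g - f ∈ S⊥` and `P_{T⊥} g ∈ S`. So the reconstructions of `f` form a coset of the
reconstructions of `0`, and these are exactly `S⊥ ∩ T`: if `w ∈ S⊥` and `u = P_{T⊥} w ∈ S`, then
`‖u‖² = re ⟪u, w⟫ = 0`, i.e. `w ∈ T`.
-/

namespace Submodule

variable {𝕜 H : Type*} [RCLike 𝕜] [NormedAddCommGroup H] [InnerProductSpace 𝕜 H]

theorem mem_of_mem_orthogonal_of_starProjection_orthogonal_mem {S T : Submodule 𝕜 H}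
    [T.HasOrthogonalProjection] {w : H} (hwS : w ∈ Sᗮ) (hTw : Tᗮ.starProjection w ∈ S) :
    w ∈ T := by
  have hinner : inner 𝕜 (Tᗮ.starProjection w) w = 0 := inner_right_of_mem_orthogonal hTw hwS
  have hnorm : ‖Tᗮ.orthogonalProjectionOnto w‖ ^ 2 = 0 := by
    rw [← re_inner_starProjection_eq_normSq, hinner, map_zero]
  have hzero : Tᗮ.starProjection w = 0 := by
    rw [starProjection_apply, ZeroMemClass.coe_eq_zero]
    exact norm_eq_zero.mp (pow_eq_zero_iff two_ne_zero |>.mp hnorm)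
  rwa [starProjection_apply_eq_zero_iff, orthogonal_orthogonal] at hzero

end Submodule

open Submodule

section SampleConsistentReconstruction

variable {𝕜 H : Type*} [RCLike 𝕜] [NormedAddCommGroup H] [InnerProductSpace 𝕜 H]
  {S T : Submodule 𝕜 H} [S.HasOrthogonalProjection] [T.HasOrthogonalProjection]

theorem isSCR_iff {f g : H} : IsSCR S T f g ↔ g - f ∈ Sᗮ ∧ Tᗮ.starProjection g ∈ S := by
  rw [IsSCR, ← starProjection_apply, ← starProjection_apply, ← sub_eq_zero, ← map_sub,
    starProjection_apply_eq_zero_iff, ← starProjection_apply, ← starProjection_apply,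
    ← starProjection_orthogonal_val, starProjection_apply_eq_zero_iff, orthogonal_orthogonal]

theorem isSCR_zero_iff {w : H} : IsSCR S T 0 w ↔ w ∈ Sᗮ ⊓ T := by
  rw [isSCR_iff, sub_zero, mem_inf]
  refine ⟨fun ⟨hwS, hTw⟩ ↦ ⟨hwS, mem_of_mem_orthogonal_of_starProjection_orthogonal_mem hwS hTw⟩,
    fun ⟨hwS, hwT⟩ ↦ ⟨hwS, ?_⟩⟩
  rw [(starProjection_apply_eq_zero_iff _).mpr (le_orthogonal_orthogonal T hwT)]
  exact zero_mem S

theorem IsSCR.isSCR_iff_sub_mem {f g g' : H} (hg : IsSCR S T f g) :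
    IsSCR S T f g' ↔ g' - g ∈ Sᗮ ⊓ T := by
  rw [← isSCR_zero_iff, isSCR_iff, isSCR_iff, sub_zero, map_sub]
  obtain ⟨hgS, hTg⟩ := isSCR_iff.mp hg
  rw [← sub_mem_iff_left _ hgS, sub_sub_sub_cancel_right, sub_mem_iff_left _ hTg]

end SampleConsistentReconstruction

theorem stmt_5_general {𝕜 H : Type*} [RCLike 𝕜] [NormedAddCommGroup H] [InnerProductSpace 𝕜 H]
    (S T : Submodule 𝕜 H)
    [Submodule.HasOrthogonalProjection S] [Submodule.HasOrthogonalProjection T] :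
    (∀ f fhat₁ fhat₂ : H, IsSCR S T f fhat₁ → IsSCR S T f fhat₂ → fhat₁ - fhat₂ ∈ Sᗮ ⊓ T) ∧
    (∀ f fhat w : H, IsSCR S T f fhat → w ∈ Sᗮ ⊓ T → IsSCR S T f (fhat + w)) ∧
    (∀ f fhat : H, IsSCR S T f fhat →
      {g : H | IsSCR S T f g} = {g : H | ∃ w ∈ Sᗮ ⊓ T, g = fhat + w}) ∧
    ((∀ f fhat₁ fhat₂ : H, IsSCR S T f fhat₁ → IsSCR S T f fhat₂ → fhat₁ = fhat₂) ↔
      Sᗮ ⊓ T = ⊥) := by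
  refine ⟨fun f g₁ g₂ h₁ h₂ ↦ h₂.isSCR_iff_sub_mem.mp h₁,
    fun f g w hg hw ↦ hg.isSCR_iff_sub_mem.mpr (by rwa [add_sub_cancel_left]),
    fun f g hg ↦ Set.ext fun g' ↦ ?_, ⟨fun huniq ↦ ?_, fun hbot f g₁ g₂ h₁ h₂ ↦ ?_⟩⟩
  · exact hg.isSCR_iff_sub_mem.trans ⟨fun hw ↦ ⟨g' - g, hw, (add_sub_cancel g g').symm⟩,
      fun ⟨w, hw, hg'⟩ ↦ by rwa [hg', add_sub_cancel_left]⟩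
  · have h₀ : IsSCR S T 0 0 := isSCR_zero_iff.mpr (zero_mem _)
    exact (Submodule.eq_bot_iff _).mpr fun w hw ↦ huniq 0 w 0 (isSCR_zero_iff.mpr hw) h₀
  · simpa [hbot, sub_eq_zero] using h₂.isSCR_iff_sub_mem.mp h₁

/-- differences of sample consistent reconstructions lie in `S⊥ ∩ T`; adding any
element of `S⊥ ∩ T` to a sample consistent reconstruction yields another one; hence the set of
all sample consistent reconstructions of `f` is the plane `fhat + (S⊥ ∩ T)`, and sample
consistent reconstructions are unique (whenever they exist) iff `S⊥ ∩ T = {0}`. -/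
theorem stmt_5 {𝕜 H : Type*} [RCLike 𝕜] [NormedAddCommGroup H] [InnerProductSpace 𝕜 H]
    [CompleteSpace H] (S T : Submodule 𝕜 H)
    [Submodule.HasOrthogonalProjection S] [Submodule.HasOrthogonalProjection T] :
    (∀ f fhat₁ fhat₂ : H, IsSCR S T f fhat₁ → IsSCR S T f fhat₂ → fhat₁ - fhat₂ ∈ Sᗮ ⊓ T) ∧
    (∀ f fhat w : H, IsSCR S T f fhat → w ∈ Sᗮ ⊓ T → IsSCR S T f (fhat + w)) ∧
    (∀ f fhat : H, IsSCR S T f fhat →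
      {g : H | IsSCR S T f g} = {g : H | ∃ w ∈ Sᗮ ⊓ T, g = fhat + w}) ∧
    ((∀ f fhat₁ fhat₂ : H, IsSCR S T f fhat₁ → IsSCR S T f fhat₂ → fhat₁ = fhat₂) ↔
      Sᗮ ⊓ T = ⊥) :=
  stmt_5_general S T
end

section
/- Let M be a closed subspace of H, let f ∈ T with P_{S⊥} f ∈ M, and suppose x̂ is the unique minimizer of the functional x ↦ ‖P_{T⊥}(x + P_S f)‖² over x ∈ M ∩ S⊥. Then x̂ = P_{S⊥} f, and consequently the reconstruction f̂ = x̂ + P_S f equals f. -/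
theorem Submodule.orthogonalProjectionOnto_orthogonal_add_orthogonalProjectionOnto
    {𝕜 E : Type*} [RCLike 𝕜] [NormedAddCommGroup E] [InnerProductSpace 𝕜 E]
    (K : Submodule 𝕜 E) [K.HasOrthogonalProjection] (v : E) :
    (Kᗮ.orthogonalProjectionOnto v : E) + K.orthogonalProjectionOnto v = v := by
  simpa only [Submodule.starProjection_apply, add_comm] using
    K.starProjection_add_starProjection_orthogonal v

theorem stmt_7_general {𝕜 H : Type*} [RCLike 𝕜] [NormedAddCommGroup H] [InnerProductSpace 𝕜 H]
    (S T M : Submodule 𝕜 H)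
    [Submodule.HasOrthogonalProjection S] [Submodule.HasOrthogonalProjection T]
    (f : H) (hf : f ∈ T) (hfM : (Submodule.orthogonalProjectionOnto Sᗮ f : H) ∈ M)
    (xhat : H)
    (huniq : ∀ x ∈ M ⊓ Sᗮ,
      (∀ y ∈ M ⊓ Sᗮ,
        ‖(x + (Submodule.orthogonalProjectionOnto S f : H)) -
            (Submodule.orthogonalProjectionOnto T (x + (Submodule.orthogonalProjectionOnto S f : H)) : H)‖ ^ 2 ≤
          ‖(y + (Submodule.orthogonalProjectionOnto S f : H)) -
            (Submodule.orthogonalProjectionOnto T (y + (Submodule.orthogonalProjectionOnto S f : H)) : H)‖ ^ 2) →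
      x = xhat) :
    xhat = (Submodule.orthogonalProjectionOnto Sᗮ f : H) ∧ xhat + (Submodule.orthogonalProjectionOnto S f : H) = f := by
  have hsum := S.orthogonalProjectionOnto_orthogonal_add_orthogonalProjectionOnto f
  -- `P_{S⊥} f` reconstructs `f ∈ T` exactly, so it attains the least possible value `0`.
  have hzero : ‖(Submodule.orthogonalProjectionOnto Sᗮ f : H) + Submodule.orthogonalProjectionOnto S f -
      Submodule.orthogonalProjectionOnto T ((Submodule.orthogonalProjectionOnto Sᗮ f : H) +
        Submodule.orthogonalProjectionOnto S f)‖ ^ 2 = 0 := by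
    rw [hsum, ← Submodule.starProjection_apply, Submodule.starProjection_eq_self_iff.mpr hf,
      sub_self, norm_zero, sq, mul_zero]
  have heq : (Submodule.orthogonalProjectionOnto Sᗮ f : H) = xhat :=
    huniq _ ⟨hfM, Submodule.coe_mem _⟩ fun y _ => hzero ▸ sq_nonneg _
  exact ⟨heq.symm, heq ▸ hsum⟩

/-- Let `M` be a closed subspace, `f ∈ T` with `P_{S⊥} f ∈ M`, and suppose `xhat`
is the unique minimizer of `x ↦ ‖P_{T⊥}(x + P_S f)‖²` over `x ∈ M ∩ S⊥`. Then
`xhat = P_{S⊥} f`, and the reconstruction `fhat = xhat + P_S f` equals `f`. -/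
theorem stmt_7 {𝕜 H : Type*} [RCLike 𝕜] [NormedAddCommGroup H] [InnerProductSpace 𝕜 H]
    [CompleteSpace H] (S T M : Submodule 𝕜 H) (hM : IsClosed (M : Set H))
    [Submodule.HasOrthogonalProjection S] [Submodule.HasOrthogonalProjection T]
    (f : H) (hf : f ∈ T) (hfM : (Submodule.orthogonalProjectionOnto Sᗮ f : H) ∈ M)
    (xhat : H) (hxhat : xhat ∈ M ⊓ Sᗮ)
    (hmin : ∀ x ∈ M ⊓ Sᗮ,
      ‖(xhat + (Submodule.orthogonalProjectionOnto S f : H)) -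
          (Submodule.orthogonalProjectionOnto T (xhat + (Submodule.orthogonalProjectionOnto S f : H)) : H)‖ ^ 2 ≤
        ‖(x + (Submodule.orthogonalProjectionOnto S f : H)) -
          (Submodule.orthogonalProjectionOnto T (x + (Submodule.orthogonalProjectionOnto S f : H)) : H)‖ ^ 2)
    (huniq : ∀ x ∈ M ⊓ Sᗮ,
      (∀ y ∈ M ⊓ Sᗮ,
        ‖(x + (Submodule.orthogonalProjectionOnto S f : H)) -
            (Submodule.orthogonalProjectionOnto T (x + (Submodule.orthogonalProjectionOnto S f : H)) : H)‖ ^ 2 ≤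
          ‖(y + (Submodule.orthogonalProjectionOnto S f : H)) -
            (Submodule.orthogonalProjectionOnto T (y + (Submodule.orthogonalProjectionOnto S f : H)) : H)‖ ^ 2) →
      x = xhat) :
    xhat = (Submodule.orthogonalProjectionOnto Sᗮ f : H) ∧ xhat + (Submodule.orthogonalProjectionOnto S f : H) = f :=
  stmt_7_general S T M f hf hfM xhat huniq
end

section
/- Let A be a bounded self-adjoint nonnegative operator on H and suppose 1/ρ := inf{⟨x, A x⟩ / ⟨x, x⟩ : x ∈ P_{S⊥}(range A), x ≠ 0} > 0, where P_{S⊥}(range A) = {P_{S⊥} A y : y ∈ H}. Then for every f ∈ H and every h ∈ range(A) + S there exists f̂ ∈ H with P_{S⊥}(A f̂ − h) = 0 and P_S f̂ = P_S f, and the minimal-norm solution x̂_n of the equivalent problem P_{S⊥}(A(x + P_S f) − h) = 0, x ∈ S⊥, satisfies ‖x̂_n‖² ≤ ρ² ‖P_{S⊥}(h − A P_S f)‖². -/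
/-!
Write `P` for the orthogonal projection onto `Sᗮ` and `T = P A`. For `v` in the range of `T` we
have `v ∈ Sᗮ`, so `⟪v, T v⟫ = ⟪v, A v⟫ ≥ ρ⁻¹ ‖v‖²`; by continuity this coercivity persists on the
closure `M` of the range. Since `T` maps `M` into itself, a Lax–Milgram argument makes `T : M → M`
surjective, so `T x = P (h - A P_S f)` has a solution `x ∈ M ⊆ Sᗮ`, and coercivity gives
`ρ⁻¹ ‖x‖² ≤ re ⟪x, T x⟫ ≤ ‖x‖ ‖P (h - A P_S f)‖`. The minimal-norm solution is no longer than `x`.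
-/

open scoped InnerProductSpace
open RCLike

section Coercive

variable {𝕜 E : Type*} [RCLike 𝕜] [NormedAddCommGroup E] [InnerProductSpace 𝕜 E]

lemma mul_norm_le_norm_of_mul_norm_sq_le_re_inner {c : ℝ} {v w : E}
    (h : c * ‖v‖ ^ 2 ≤ re ⟪v, w⟫_𝕜) : c * ‖v‖ ≤ ‖w‖ := by
  rcases (norm_nonneg v).eq_or_lt with hv | hv
  · simp [← hv]
  · refine le_of_mul_le_mul_right ?_ hv
    calc c * ‖v‖ * ‖v‖ = c * ‖v‖ ^ 2 := by ring
      _ ≤ re ⟪v, w⟫_𝕜 := h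
      _ ≤ ‖v‖ * ‖w‖ := re_inner_le_norm v w
      _ = ‖w‖ * ‖v‖ := mul_comm _ _

lemma mul_norm_sq_le_re_inner_of_eq_sInf {ι : Type*} (A : E →L[𝕜] E) (g : ι → E) {c : ℝ}
    (hc : 0 < c)
    (hcinf : c = sInf {r : ℝ | ∃ i, g i ≠ 0 ∧ r = re ⟪g i, A (g i)⟫_𝕜 / re ⟪g i, g i⟫_𝕜})
    (i : ι) : c * ‖g i‖ ^ 2 ≤ re ⟪g i, A (g i)⟫_𝕜 := by
  by_cases hi : g i = 0
  · simp [hi]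
  -- `sInf` of a set that is not bounded below is `0`, which `hc` excludes.
  have hbdd : BddBelow {r : ℝ | ∃ i, g i ≠ 0 ∧ r = re ⟪g i, A (g i)⟫_𝕜 / re ⟪g i, g i⟫_𝕜} := by
    by_contra hnot
    exact hc.ne' (hcinf.trans (Real.sInf_of_not_bddBelow hnot))
  have hle := hcinf ▸ csInf_le hbdd ⟨i, hi, rfl⟩
  rwa [inner_self_eq_norm_sq, le_div_iff₀ (by positivity)] at hle

lemma mul_norm_sq_le_re_inner_of_mem_closure (T : E →L[𝕜] E) {c : ℝ} {s : Set E}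
    (hs : ∀ v ∈ s, c * ‖v‖ ^ 2 ≤ re ⟪v, T v⟫_𝕜) {v : E} (hv : v ∈ closure s) :
    c * ‖v‖ ^ 2 ≤ re ⟪v, T v⟫_𝕜 :=
  closure_minimal hs (isClosed_le (by fun_prop)
    (continuous_re.comp (continuous_id.inner T.continuous))) hv

variable [CompleteSpace E]

theorem ContinuousLinearMap.surjective_of_coercive (T : E →L[𝕜] E) {c : ℝ} (hc : 0 < c)
    (hT : ∀ v, c * ‖v‖ ^ 2 ≤ re ⟪v, T v⟫_𝕜) : Function.Surjective T := by
  have hanti : AntilipschitzWith (Real.toNNReal c⁻¹) T := T.antilipschitz_of_bound fun v => by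
    rw [Real.coe_toNNReal _ (inv_nonneg.2 hc.le), inv_mul_eq_div, le_div_iff₀ hc, mul_comm]
    exact mul_norm_le_norm_of_mul_norm_sq_le_re_inner (hT v)
  have hclosed : IsClosed (T.range : Set E) := hanti.isClosed_range T.uniformContinuous
  have := hclosed.completeSpace_coe
  have hperp : T.rangeᗮ = ⊥ := by
    refine (Submodule.eq_bot_iff _).2 fun u hu => ?_
    have hTu : ⟪u, T u⟫_𝕜 = 0 := by
      rw [← inner_conj_symm, (hu _ ⟨u, rfl⟩ : ⟪T u, u⟫_𝕜 = 0), map_zero]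
    have : c * ‖u‖ ^ 2 ≤ 0 := by simpa [hTu] using hT u
    exact norm_eq_zero.1 (pow_eq_zero_iff two_ne_zero |>.1
      (le_antisymm (nonpos_of_mul_nonpos_right this hc) (sq_nonneg _)))
  exact LinearMap.range_eq_top.1 (Submodule.orthogonal_eq_bot_iff.1 hperp)

theorem ContinuousLinearMap.exists_mem_closure_range_apply_eq (T : E →L[𝕜] E) {c : ℝ}
    (hc : 0 < c) (hT : ∀ z, c * ‖T z‖ ^ 2 ≤ re ⟪T z, T (T z)⟫_𝕜) (z : E) :
    ∃ x ∈ T.range.topologicalClosure, T x = T z ∧ c * ‖x‖ ≤ ‖T z‖ := by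
  set M := T.range.topologicalClosure
  have := (Submodule.isClosed_topologicalClosure T.range).completeSpace_coe
  have hTM : ∀ v, T v ∈ M := fun v => T.range.le_topologicalClosure ⟨v, rfl⟩
  have hcoer : ∀ v ∈ M, c * ‖v‖ ^ 2 ≤ re ⟪v, T v⟫_𝕜 := fun v hv =>
    mul_norm_sq_le_re_inner_of_mem_closure T (s := T.range) (by rintro _ ⟨z, rfl⟩; exact hT z)
      (by rwa [← Submodule.topologicalClosure_coe])
  obtain ⟨x, hx⟩ := ((T ∘L M.subtypeL).codRestrict M fun v => hTM v).surjective_of_coercive hc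
    (fun v => hcoer v v.2) ⟨T z, hTM z⟩
  have hTx : T x = T z := congrArg Subtype.val hx
  exact ⟨x, x.2, hTx, mul_norm_le_norm_of_mul_norm_sq_le_re_inner (hTx ▸ hcoer x x.2)⟩

end Coercive

theorem stmt_10_general {𝕜 H : Type*} [RCLike 𝕜] [NormedAddCommGroup H] [InnerProductSpace 𝕜 H]
    [CompleteSpace H] (S : Submodule 𝕜 H) [S.HasOrthogonalProjection]
    (A : H →L[𝕜] H)
    (ρ : ℝ) (hρpos : 0 < ρ)
    (hρ : 1 / ρ = sInf {r : ℝ | ∃ y : H, (Submodule.orthogonalProjectionOnto Sᗮ (A y) : H) ≠ 0 ∧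
      r = RCLike.re (⟪(Submodule.orthogonalProjectionOnto Sᗮ (A y) : H),
            A (Submodule.orthogonalProjectionOnto Sᗮ (A y) : H)⟫_𝕜) /
          RCLike.re (⟪(Submodule.orthogonalProjectionOnto Sᗮ (A y) : H),
            (Submodule.orthogonalProjectionOnto Sᗮ (A y) : H)⟫_𝕜)})
    (f h : H) (hh : ∃ y : H, ∃ s ∈ S, h = A y + s) :
    (∃ fhat : H, (Submodule.orthogonalProjectionOnto Sᗮ (A fhat - h) : H) = 0 ∧
        (Submodule.orthogonalProjectionOnto S fhat : H) = (Submodule.orthogonalProjectionOnto S f : H)) ∧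
    ∀ xn : H, (xn ∈ Sᗮ ∧
        (Submodule.orthogonalProjectionOnto Sᗮ (A (xn + (Submodule.orthogonalProjectionOnto S f : H)) - h) : H) = 0 ∧
        ∀ x : H, x ∈ Sᗮ →
          (Submodule.orthogonalProjectionOnto Sᗮ (A (x + (Submodule.orthogonalProjectionOnto S f : H)) - h) : H) = 0 →
          ‖xn‖ ≤ ‖x‖) →
      ‖xn‖ ^ 2 ≤ ρ ^ 2 * ‖(Submodule.orthogonalProjectionOnto Sᗮ (h - A (Submodule.orthogonalProjectionOnto S f : H)) : H)‖ ^ 2 := by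
  obtain ⟨y, s, hs, rfl⟩ := hh
  simp only [Submodule.coe_orthogonalProjectionOnto_apply] at hρ ⊢
  set T := Sᗮ.starProjection ∘L A
  set p := S.starProjection f
  have hcoer (z : H) : 1 / ρ * ‖T z‖ ^ 2 ≤ re ⟪T z, T (T z)⟫_𝕜 := by
    have hPT : ⟪T z, T (T z)⟫_𝕜 = ⟪T z, A (T z)⟫_𝕜 := by
      change ⟪T z, Sᗮ.starProjection (A (T z))⟫_𝕜 = _
      have hTz : Sᗮ.starProjection (T z) = T z :=
        Submodule.starProjection_eq_self_iff.2 (Submodule.starProjection_apply_mem _ _)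
      rw [← Submodule.inner_starProjection_left_eq_right, hTz]
    rw [hPT]
    exact mul_norm_sq_le_re_inner_of_eq_sInf A T (one_div_pos.2 hρpos) hρ z
  obtain ⟨x, hxM, hTx, hx⟩ := T.exists_mem_closure_range_apply_eq (one_div_pos.2 hρpos) hcoer (y - p)
  have hxS : x ∈ Sᗮ := Submodule.topologicalClosure_minimal _
    (by rintro _ ⟨z, rfl⟩; exact Submodule.starProjection_apply_mem _ _) S.isClosed_orthogonal hxM
  have hPs : Sᗮ.starProjection s = 0 :=
    (Submodule.starProjection_apply_eq_zero_iff _).2 (S.le_orthogonal_orthogonal hs)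
  have hrhs : Sᗮ.starProjection (A y + s - A p) = T (y - p) := by
    simp only [T, ContinuousLinearMap.comp_apply, map_sub, map_add, hPs, add_zero]
  have hfeas : Sᗮ.starProjection (A (x + p) - (A y + s)) = 0 := by
    have hsplit : Sᗮ.starProjection (A (x + p) - (A y + s)) =
        T x - Sᗮ.starProjection (A y + s - A p) := by
      simp only [T, ContinuousLinearMap.comp_apply, map_sub, map_add]
      abel
    rw [hsplit, hTx, hrhs, sub_self]
  refine ⟨⟨x + p, hfeas, ?_⟩, ?_⟩
  · rw [map_add, (Submodule.starProjection_apply_eq_zero_iff _).2 hxS, zero_add,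
      Submodule.starProjection_eq_self_iff.2 (Submodule.starProjection_apply_mem _ _)]
  · rintro xn ⟨-, -, hmin⟩
    have hxn : ‖xn‖ ≤ ρ * ‖T (y - p)‖ := (hmin x hxS hfeas).trans <| by
      rwa [one_div, inv_mul_le_iff₀ hρpos] at hx
    rw [hrhs, ← mul_pow]
    exact pow_le_pow_left₀ (norm_nonneg _) hxn 2

/-- Let `A` be a bounded self-adjoint nonnegative operator with
`1/ρ := inf {⟨x, A x⟩/⟨x, x⟩ : x ∈ P_{S⊥}(range A), x ≠ 0} > 0`. Then for every `f` and every
`h ∈ range A + S` there exists `fhat` with `P_{S⊥}(A fhat − h) = 0` and `P_S fhat = P_S f`, and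
the minimal-norm solution `xn` of the equivalent problem `P_{S⊥}(A(x + P_S f) − h) = 0`, `x ∈ S⊥`,
satisfies `‖xn‖² ≤ ρ² ‖P_{S⊥}(h − A P_S f)‖²`. -/
theorem stmt_10 {𝕜 H : Type*} [RCLike 𝕜] [NormedAddCommGroup H] [InnerProductSpace 𝕜 H]
    [CompleteSpace H] (S : Submodule 𝕜 H) [S.HasOrthogonalProjection]
    (A : H →L[𝕜] H) (hA : IsSelfAdjoint A)
    (hApos : ∀ x : H, 0 ≤ RCLike.re (⟪x, A x⟫_𝕜))
    (ρ : ℝ) (hρpos : 0 < ρ)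
    (hρ : 1 / ρ = sInf {r : ℝ | ∃ y : H, (Submodule.orthogonalProjectionOnto Sᗮ (A y) : H) ≠ 0 ∧
      r = RCLike.re (⟪(Submodule.orthogonalProjectionOnto Sᗮ (A y) : H),
            A (Submodule.orthogonalProjectionOnto Sᗮ (A y) : H)⟫_𝕜) /
          RCLike.re (⟪(Submodule.orthogonalProjectionOnto Sᗮ (A y) : H),
            (Submodule.orthogonalProjectionOnto Sᗮ (A y) : H)⟫_𝕜)})
    (f h : H) (hh : ∃ y : H, ∃ s ∈ S, h = A y + s) :
    (∃ fhat : H, (Submodule.orthogonalProjectionOnto Sᗮ (A fhat - h) : H) = 0 ∧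
        (Submodule.orthogonalProjectionOnto S fhat : H) = (Submodule.orthogonalProjectionOnto S f : H)) ∧
    ∀ xn : H, (xn ∈ Sᗮ ∧
        (Submodule.orthogonalProjectionOnto Sᗮ (A (xn + (Submodule.orthogonalProjectionOnto S f : H)) - h) : H) = 0 ∧
        ∀ x : H, x ∈ Sᗮ →
          (Submodule.orthogonalProjectionOnto Sᗮ (A (x + (Submodule.orthogonalProjectionOnto S f : H)) - h) : H) = 0 →
          ‖xn‖ ≤ ‖x‖) →
      ‖xn‖ ^ 2 ≤ ρ ^ 2 * ‖(Submodule.orthogonalProjectionOnto Sᗮ (h - A (Submodule.orthogonalProjectionOnto S f : H)) : H)‖ ^ 2 :=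
  stmt_10_general S A ρ hρpos hρ f h hh
end

section
/- Let ν := inf{‖P_{T⊥} x‖ / ‖x‖ : x ∈ P_{S⊥}(T⊥), x ≠ 0} and suppose ν > 0. Then for every f ∈ H a sample consistent reconstruction of f exists, the normal (minimal-norm) sample consistent reconstruction f̂_n of f is unique, and it satisfies ‖f̂_n‖² ≤ ‖P_S f‖² + ‖P_{S⊥} P_{T⊥} P_S f‖² / ν⁴. -/
open scoped InnerProductSpace
open RCLike

/-! For `x ∈ S⊥` one has `re ⟪P_{S⊥} P_{T⊥} x, x⟫ = ‖P_{T⊥} x‖²`, so `ν > 0` makes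
`L = P_{S⊥} P_{T⊥}` coercive, with constant `ν²`, on the closure `V` of `P_{S⊥}(T⊥)`. As `L` maps
into `V`, coercivity makes `L : V → V` onto (its range is closed and has trivial orthogonal
complement), which yields `x₀ ∈ V ⊆ S⊥` with `L x₀ = -L (P_S f)` and `ν² ‖x₀‖ ≤ ‖L (P_S f)‖`.
The admissible `x` then form the affine subspace `x₀ + (S⊥ ∩ ker L)`, whose unique element of
minimal norm is the projection of `x₀` onto `(S⊥ ∩ ker L)⊥`; its norm is at most `‖x₀‖`, and
Pythagoras against `P_S f ∈ S` gives the bound. -/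

section Coercive

variable {𝕜 E : Type*} [RCLike 𝕜] [NormedAddCommGroup E] [InnerProductSpace 𝕜 E]

theorem mul_norm_le_norm_apply_of_le_re_inner {A : E → E} {c : ℝ}
    (hA : ∀ x, c * ‖x‖ ^ 2 ≤ re ⟪A x, x⟫_𝕜) (x : E) : c * ‖x‖ ≤ ‖A x‖ := by
  rcases (norm_nonneg x).eq_or_lt with hx | hx
  · simp [← hx]
  · refine le_of_mul_le_mul_right ?_ hx
    calc c * ‖x‖ * ‖x‖ = c * ‖x‖ ^ 2 := by ring
      _ ≤ re ⟪A x, x⟫_𝕜 := hA x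
      _ ≤ ‖A x‖ * ‖x‖ := re_inner_le_norm _ _

theorem ContinuousLinearMap.surjective_of_le_re_inner [CompleteSpace E] {A : E →L[𝕜] E} {c : ℝ}
    (hc : 0 < c) (hA : ∀ x, c * ‖x‖ ^ 2 ≤ re ⟪A x, x⟫_𝕜) : Function.Surjective A := by
  have hanti : AntilipschitzWith ⟨c⁻¹, by positivity⟩ A :=
    A.antilipschitz_of_bound fun x => by
      change ‖x‖ ≤ c⁻¹ * ‖A x‖
      rw [inv_mul_eq_div, le_div_iff₀ hc, mul_comm]
      exact mul_norm_le_norm_apply_of_le_re_inner hA x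
  have hclosed : IsClosed (LinearMap.range (A : E →ₗ[𝕜] E) : Set E) := by
    rw [LinearMap.coe_range]
    exact hanti.isClosed_range A.uniformContinuous
  have : CompleteSpace (LinearMap.range (A : E →ₗ[𝕜] E)) := hclosed.completeSpace_coe
  have hperp : (LinearMap.range (A : E →ₗ[𝕜] E))ᗮ = ⊥ := by
    refine (Submodule.eq_bot_iff _).2 fun w hw => ?_
    have hzero : ⟪A w, w⟫_𝕜 = 0 := (Submodule.mem_orthogonal _ w).1 hw _ ⟨w, rfl⟩
    have := hA w
    rw [hzero, map_zero] at this
    exact norm_eq_zero.1 (pow_eq_zero_iff two_ne_zero |>.1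
      (le_antisymm ((mul_nonpos_iff_pos_imp_nonpos.1 this).1 hc) (sq_nonneg _)))
  exact LinearMap.range_eq_top.1 (Submodule.orthogonal_eq_bot_iff.1 hperp)

end Coercive

namespace Submodule

variable {𝕜 E : Type*} [RCLike 𝕜] [NormedAddCommGroup E] [InnerProductSpace 𝕜 E]
variable (N : Submodule 𝕜 E) [N.HasOrthogonalProjection] {x₀ x : E}

theorem starProjection_orthogonal_eq_of_sub_mem (hx : x - x₀ ∈ N) :
    Nᗮ.starProjection x = Nᗮ.starProjection x₀ := by
  rw [← sub_eq_zero, ← map_sub, starProjection_apply_eq_zero_iff]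
  exact N.le_orthogonal_orthogonal hx

theorem norm_sq_eq_of_sub_mem (hx : x - x₀ ∈ N) :
    ‖x‖ ^ 2 = ‖Nᗮ.starProjection x₀‖ ^ 2 + ‖x - Nᗮ.starProjection x₀‖ ^ 2 := by
  rw [← N.starProjection_orthogonal_eq_of_sub_mem hx, N.norm_sq_eq_add_norm_sq_starProjection x,
    add_comm, starProjection_orthogonal_val, sub_sub_cancel]

theorem existsUnique_norm_le_of_sub_mem {p : E → Prop} (hp : ∀ x, p x ↔ x - x₀ ∈ N) :
    ∃! v, p v ∧ ∀ x, p x → ‖v‖ ≤ ‖x‖ := by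
  have hv₀ : Nᗮ.starProjection x₀ - x₀ ∈ N := by
    rw [starProjection_orthogonal_val, sub_sub_cancel_left]
    exact N.neg_mem (N.starProjection_apply_mem x₀)
  have hsplit (x) (hx : p x) := N.norm_sq_eq_of_sub_mem ((hp x).1 hx)
  refine ⟨Nᗮ.starProjection x₀, ⟨(hp _).2 hv₀, fun x hx => ?_⟩, fun v ⟨hv, hmin⟩ => ?_⟩
  · exact pow_le_pow_iff_left₀ (norm_nonneg _) (norm_nonneg _) two_ne_zero |>.1 <| by
      linarith [hsplit x hx, sq_nonneg ‖x - Nᗮ.starProjection x₀‖]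
  · have hvw : ‖v - Nᗮ.starProjection x₀‖ ^ 2 = 0 := by
      nlinarith [hsplit v hv, hmin _ ((hp _).2 hv₀), norm_nonneg v,
        sq_nonneg ‖v - Nᗮ.starProjection x₀‖]
    exact sub_eq_zero.1 (norm_eq_zero.1 (pow_eq_zero_iff two_ne_zero |>.1 hvw))

end Submodule

namespace SampleConsistent

variable {𝕜 H : Type*} [RCLike 𝕜] [NormedAddCommGroup H] [InnerProductSpace 𝕜 H]
  (S T : Submodule 𝕜 H) [S.HasOrthogonalProjection] [T.HasOrthogonalProjection]

noncomputable def op : H →L[𝕜] H := Sᗮ.starProjection ∘L Tᗮ.starProjection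

theorem orthogonalProjectionOnto_sub_eq_op (w : H) :
    (Sᗮ.orthogonalProjectionOnto (w - (T.orthogonalProjectionOnto w : H)) : H) = op S T w := by
  rw [op, ContinuousLinearMap.comp_apply, Submodule.starProjection_orthogonal_val (K := T)]
  rfl

theorem op_mem_map (w : H) : op S T w ∈ Tᗮ.map (Sᗮ.starProjection : H →ₗ[𝕜] H) :=
  ⟨_, Tᗮ.starProjection_apply_mem w, rfl⟩

variable {S T}

theorem re_inner_op_self {x : H} (hx : x ∈ Sᗮ) :
    re ⟪op S T x, x⟫_𝕜 = ‖Tᗮ.starProjection x‖ ^ 2 := by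
  rw [op, ContinuousLinearMap.comp_apply, Submodule.inner_starProjection_left_eq_right,
    Submodule.starProjection_eq_self_iff.2 hx, Submodule.re_inner_starProjection_eq_normSq]
  rfl

theorem le_re_inner_op_of_mem_closure {ν : ℝ} (hν₀ : 0 ≤ ν)
    (hν : ∀ y ∈ Tᗮ, ν * ‖Sᗮ.starProjection y‖ ≤ ‖Tᗮ.starProjection (Sᗮ.starProjection y)‖)
    {x : H} (hx : x ∈ (Tᗮ.map (Sᗮ.starProjection : H →ₗ[𝕜] H)).topologicalClosure) :
    ν ^ 2 * ‖x‖ ^ 2 ≤ re ⟪op S T x, x⟫_𝕜 := by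
  refine closure_minimal (t := {x | ν ^ 2 * ‖x‖ ^ 2 ≤ re ⟪op S T x, x⟫_𝕜}) ?_ ?_ hx
  · rintro _ ⟨y, hy, rfl⟩
    rw [Set.mem_ofPred_eq, ContinuousLinearMap.coe_coe,
      re_inner_op_self (Sᗮ.starProjection_apply_mem y), ← mul_pow]
    exact pow_le_pow_left₀ (by positivity) (hν y hy) 2
  · exact isClosed_le (by fun_prop) (continuous_re.comp (by fun_prop))

theorem mul_norm_le_of_eq_sInf {ν : ℝ}
    (hν : ν = sInf {r : ℝ | ∃ y ∈ Tᗮ, (Sᗮ.orthogonalProjectionOnto y : H) ≠ 0 ∧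
      r = ‖(Tᗮ.orthogonalProjectionOnto (Sᗮ.orthogonalProjectionOnto y : H) : H)‖ /
        ‖(Sᗮ.orthogonalProjectionOnto y : H)‖})
    (y : H) (hy : y ∈ Tᗮ) :
    ν * ‖Sᗮ.starProjection y‖ ≤ ‖Tᗮ.starProjection (Sᗮ.starProjection y)‖ := by
  rcases eq_or_ne (Sᗮ.starProjection y) 0 with h | h
  · simp [h]
  · rw [← le_div_iff₀ (norm_pos_iff.2 h), hν]
    refine csInf_le ⟨0, ?_⟩ ⟨y, hy, h, rfl⟩
    rintro _ ⟨_, _, _, rfl⟩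
    positivity

theorem exists_mem_orthogonal_op_eq [CompleteSpace H] {ν : ℝ} (hν₀ : 0 < ν)
    (hν : ∀ y ∈ Tᗮ, ν * ‖Sᗮ.starProjection y‖ ≤ ‖Tᗮ.starProjection (Sᗮ.starProjection y)‖)
    (w : H) : ∃ x ∈ Sᗮ, op S T x = op S T w ∧ ν ^ 2 * ‖x‖ ≤ ‖op S T w‖ := by
  set V := (Tᗮ.map (Sᗮ.starProjection : H →ₗ[𝕜] H)).topologicalClosure
  have hVS : V ≤ Sᗮ := Submodule.topologicalClosure_minimal _
    (by rintro _ ⟨y, -, rfl⟩; exact Sᗮ.starProjection_apply_mem y) S.isClosed_orthogonal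
  have hV (w : H) : op S T w ∈ V := Submodule.le_topologicalClosure _ (op_mem_map S T w)
  have : CompleteSpace V := (Tᗮ.map _).isClosed_topologicalClosure.completeSpace_coe
  let A : V →L[𝕜] V := (op S T ∘L V.subtypeL).codRestrict V fun v => hV v
  have hA (v : V) : ν ^ 2 * ‖v‖ ^ 2 ≤ re ⟪A v, v⟫_𝕜 := le_re_inner_op_of_mem_closure hν₀.le hν v.2
  obtain ⟨v, hv⟩ := A.surjective_of_le_re_inner (by positivity) hA ⟨_, hV w⟩
  have hv' : op S T v = op S T w := congrArg (Subtype.val : V → H) hv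
  refine ⟨v, hVS v.2, hv', ?_⟩
  simpa [hv] using mul_norm_le_norm_apply_of_le_re_inner hA v

end SampleConsistent

/-- If `ν := inf {‖P_{T⊥} x‖/‖x‖ : x ∈ P_{S⊥}(T⊥), x ≠ 0} > 0`, then for every
`f ∈ H` a sample consistent reconstruction exists, the normal (minimal-norm) sample consistent
reconstruction `fn = xn + P_S f` is unique, and satisfies
`‖fn‖² ≤ ‖P_S f‖² + ‖P_{S⊥} P_{T⊥} P_S f‖²/ν⁴`. -/
theorem stmt_11 {𝕜 H : Type*} [RCLike 𝕜] [NormedAddCommGroup H] [InnerProductSpace 𝕜 H]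
    [CompleteSpace H] (S T : Submodule 𝕜 H)
    [Submodule.HasOrthogonalProjection S] [Submodule.HasOrthogonalProjection T]
    (ν : ℝ)
    (hν : ν = sInf {r : ℝ | ∃ y ∈ Tᗮ, (Submodule.orthogonalProjectionOnto Sᗮ y : H) ≠ 0 ∧
      r = ‖(Submodule.orthogonalProjectionOnto Tᗮ ((Submodule.orthogonalProjectionOnto Sᗮ y : H)) : H)‖ /
        ‖(Submodule.orthogonalProjectionOnto Sᗮ y : H)‖})
    (hνpos : 0 < ν) (f : H) :
    (∃ fhat : H, (Submodule.orthogonalProjectionOnto S fhat : H) = (Submodule.orthogonalProjectionOnto S f : H) ∧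
        (Submodule.orthogonalProjectionOnto Sᗮ (fhat - (Submodule.orthogonalProjectionOnto T fhat : H)) : H) = 0) ∧
    (∃! xn : H, xn ∈ Sᗮ ∧
        (Submodule.orthogonalProjectionOnto Sᗮ ((xn + (Submodule.orthogonalProjectionOnto S f : H)) -
          (Submodule.orthogonalProjectionOnto T (xn + (Submodule.orthogonalProjectionOnto S f : H)) : H)) : H) = 0 ∧
        ∀ x : H, x ∈ Sᗮ →
          (Submodule.orthogonalProjectionOnto Sᗮ ((x + (Submodule.orthogonalProjectionOnto S f : H)) -
            (Submodule.orthogonalProjectionOnto T (x + (Submodule.orthogonalProjectionOnto S f : H)) : H)) : H) = 0 →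
          ‖xn‖ ≤ ‖x‖) ∧
    (∀ xn : H, (xn ∈ Sᗮ ∧
        (Submodule.orthogonalProjectionOnto Sᗮ ((xn + (Submodule.orthogonalProjectionOnto S f : H)) -
          (Submodule.orthogonalProjectionOnto T (xn + (Submodule.orthogonalProjectionOnto S f : H)) : H)) : H) = 0 ∧
        ∀ x : H, x ∈ Sᗮ →
          (Submodule.orthogonalProjectionOnto Sᗮ ((x + (Submodule.orthogonalProjectionOnto S f : H)) -
            (Submodule.orthogonalProjectionOnto T (x + (Submodule.orthogonalProjectionOnto S f : H)) : H)) : H) = 0 →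
          ‖xn‖ ≤ ‖x‖) →
      ‖xn + (Submodule.orthogonalProjectionOnto S f : H)‖ ^ 2 ≤ ‖(Submodule.orthogonalProjectionOnto S f : H)‖ ^ 2 +
        ‖(Submodule.orthogonalProjectionOnto Sᗮ
            ((Submodule.orthogonalProjectionOnto S f : H) -
              (Submodule.orthogonalProjectionOnto T (Submodule.orthogonalProjectionOnto S f : H) : H)) : H)‖ ^ 2 / ν ^ 4) := by
  simp only [SampleConsistent.orthogonalProjectionOnto_sub_eq_op]
  set g : H := (S.orthogonalProjectionOnto f : H)
  obtain ⟨x₀, hx₀S, hLx₀, hx₀_le⟩ := SampleConsistent.exists_mem_orthogonal_op_eq hνpos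
    (SampleConsistent.mul_norm_le_of_eq_sInf hν) (-g)
  set L := SampleConsistent.op S T
  set N := Sᗮ ⊓ LinearMap.ker (L : H →ₗ[𝕜] H)
  have : CompleteSpace N :=
    (S.isClosed_orthogonal.inter (isClosed_singleton.preimage L.continuous)).completeSpace_coe
  have hsol (x : H) : x ∈ Sᗮ ∧ L (x + g) = 0 ↔ x - x₀ ∈ N := by
    have : L (x + g) = L (x - x₀) := by rw [map_add, map_sub, hLx₀, map_neg, sub_neg_eq_add]
    rw [Submodule.mem_inf, LinearMap.mem_ker, Submodule.sub_mem_iff_left _ hx₀S,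
      ContinuousLinearMap.coe_coe, this]
  have hx₀ : x₀ ∈ Sᗮ ∧ L (x₀ + g) = 0 := (hsol x₀).2 (by simp)
  refine ⟨⟨x₀ + g, ?_, hx₀.2⟩, ?_, ?_⟩
  · simp [g, Submodule.orthogonalProjectionOnto_apply_of_mem_orthogonal hx₀S,
      Submodule.starProjection_eq_self_iff]
  · simpa only [← and_imp, ← and_assoc] using N.existsUnique_norm_le_of_sub_mem hsol
  · rintro xn ⟨hxnS, -, hmin⟩
    have hxn : ν ^ 2 * ‖xn‖ ≤ ‖L g‖ := by
      rw [map_neg, norm_neg] at hx₀_le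
      exact (mul_le_mul_of_nonneg_left (hmin x₀ hx₀.1 hx₀.2) (by positivity)).trans hx₀_le
    have hpyth : ‖xn + g‖ ^ 2 = ‖xn‖ ^ 2 + ‖g‖ ^ 2 := by
      simpa only [sq] using norm_add_sq_eq_norm_sq_add_norm_sq_of_inner_eq_zero xn g
        (S.inner_left_of_mem_orthogonal (S.orthogonalProjectionOnto f).2 hxnS)
    have hxn_sq : ‖xn‖ ^ 2 ≤ ‖L g‖ ^ 2 / ν ^ 4 := by
      rw [le_div_iff₀ (by positivity), show ν ^ 4 = (ν ^ 2) ^ 2 by ring, ← mul_pow, mul_comm]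
      exact pow_le_pow_left₀ (by positivity) hxn 2
    linarith
end

section
/- Let ν := inf{‖P_{T⊥} x‖ / ‖x‖ : x ∈ P_{S⊥}(T⊥), x ≠ 0}. If for every f ∈ H there exists a sample consistent reconstruction of f (i.e., some f̂ with P_S f̂ = P_S f and P_{S⊥} P_{T⊥} f̂ = 0), then ν > 0. (Combined with the converse, ν > 0 is necessary and sufficient for the existence of a sample consistent reconstruction for every signal f.) -/
/-!
A sample consistent reconstruction `f̂` of `f` splits `f` as
`P_T f̂ + (f̂ - P_T f̂) + (f - f̂) ∈ T + (S ∩ T⊥) + S⊥`, so the hypothesis says that the sum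
map `T × (S ∩ T⊥) × S⊥ → H` is onto; by the open mapping theorem the `S⊥`-component can be
chosen with norm at most `C ‖f‖`. Given `y ∈ T⊥` we may replace it by `y' = y - P_{S ∩ T⊥} y`,
which has the same image `x = P_{S⊥} y` and is orthogonal to `T` and to `S ∩ T⊥`.
Decomposing `y' = t + u + w` gives `‖y'‖² = ⟪y', w⟫ = ⟪x, w⟫`, hence `‖y'‖ ≤ C ‖x‖`, and then
`‖x‖² = ⟪P_{T⊥} x, y'⟫ ≤ ‖P_{T⊥} x‖ C ‖x‖`, i.e. `‖P_{T⊥} x‖ / ‖x‖ ≥ C⁻¹`.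
-/

open Submodule RCLike
open scoped InnerProductSpace

theorem Submodule.exists_add_add_eq_and_norm_le {𝕜 E : Type*} [NontriviallyNormedField 𝕜]
    [NormedAddCommGroup E] [NormedSpace 𝕜 E] [CompleteSpace E] (A B D : Submodule 𝕜 E)
    [CompleteSpace A] [CompleteSpace B] [CompleteSpace D]
    (h : ∀ f, ∃ a ∈ A, ∃ b ∈ B, ∃ d ∈ D, a + b + d = f) :
    ∃ C > 0, ∀ f, ∃ a ∈ A, ∃ b ∈ B, ∃ d ∈ D,
      a + b + d = f ∧ ‖d‖ ≤ C * ‖f‖ := by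
  let φ : (A × B × D) →L[𝕜] E :=
    A.subtypeL ∘L .fst 𝕜 _ _ + B.subtypeL ∘L .fst 𝕜 _ _ ∘L .snd 𝕜 _ _ +
      D.subtypeL ∘L .snd 𝕜 _ _ ∘L .snd 𝕜 _ _
  have hφ : Function.Surjective φ := by
    intro f
    obtain ⟨a, ha, b, hb, d, hd, rfl⟩ := h f
    exact ⟨(⟨a, ha⟩, ⟨b, hb⟩, ⟨d, hd⟩), rfl⟩
  obtain ⟨C, hC, hpre⟩ := φ.exists_preimage_norm_le hφ
  refine ⟨C, hC, fun f ↦ ?_⟩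
  obtain ⟨⟨a, b, d⟩, rfl, hnorm⟩ := hpre f
  refine ⟨a, a.2, b, b.2, d, d.2, rfl, ?_⟩
  calc ‖(d : E)‖ = ‖d‖ := rfl
    _ ≤ ‖(b, d)‖ := norm_snd_le (b, d)
    _ ≤ ‖(a, b, d)‖ := norm_snd_le (a, b, d)
    _ ≤ _ := hnorm

section

variable {𝕜 H : Type*} [RCLike 𝕜] [NormedAddCommGroup H] [InnerProductSpace 𝕜 H]

theorem Submodule.starProjection_orthogonal_sub_starProjection_of_le {U S : Submodule 𝕜 H}
    [U.HasOrthogonalProjection] [S.HasOrthogonalProjection] (hUS : U ≤ S) (y : H) :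
    Sᗮ.starProjection (y - U.starProjection y) = Sᗮ.starProjection y := by
  have : Sᗮ.starProjection (U.starProjection y) = 0 :=
    (starProjection_apply_eq_zero_iff _).2
      (S.le_orthogonal_orthogonal (hUS (U.starProjection_apply_mem y)))
  rw [map_sub, this, sub_zero]

theorem Submodule.norm_starProjection_sq_le {K L : Submodule 𝕜 H}
    [K.HasOrthogonalProjection] [L.HasOrthogonalProjection] {y : H} (hy : y ∈ L) :
    ‖K.starProjection y‖ ^ 2 ≤ ‖L.starProjection (K.starProjection y)‖ * ‖y‖ := by
  have hinner :
      ⟪K.starProjection y, y⟫_𝕜 = ⟪L.starProjection (K.starProjection y), y⟫_𝕜 := by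
    rw [inner_starProjection_left_eq_right L, starProjection_eq_self_iff.2 hy]
  calc ‖K.starProjection y‖ ^ 2 = re ⟪K.starProjection y, y⟫_𝕜 :=
        (K.re_inner_starProjection_eq_normSq y).symm
    _ = re ⟪L.starProjection (K.starProjection y), y⟫_𝕜 := by rw [hinner]
    _ ≤ ‖⟪L.starProjection (K.starProjection y), y⟫_𝕜‖ := re_le_norm _
    _ ≤ _ := norm_inner_le_norm _ _

theorem Submodule.norm_le_mul_norm_starProjection {A B K : Submodule 𝕜 H}
    [K.HasOrthogonalProjection] {C : ℝ}
    (hdec : ∀ f, ∃ a ∈ A, ∃ b ∈ B, ∃ w ∈ K, a + b + w = f ∧ ‖w‖ ≤ C * ‖f‖)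
    {y : H} (hyA : y ∈ Aᗮ) (hyB : y ∈ Bᗮ) :
    ‖y‖ ≤ C * ‖K.starProjection y‖ := by
  obtain ⟨a, ha, b, hb, w, hw, hsum, hwle⟩ := hdec y
  have hinner : ⟪w, y⟫_𝕜 = ⟪w, K.starProjection y⟫_𝕜 := by
    rw [← inner_starProjection_left_eq_right, starProjection_eq_self_iff.2 hw]
  have hsq : ‖y‖ * ‖y‖ ≤ C * ‖K.starProjection y‖ * ‖y‖ := calc
    ‖y‖ * ‖y‖ = re ⟪a + b + w, y⟫_𝕜 := by rw [hsum, inner_self_eq_norm_mul_norm]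
    _ = re ⟪w, K.starProjection y⟫_𝕜 := by
      rw [inner_add_left, inner_add_left, inner_right_of_mem_orthogonal ha hyA,
        inner_right_of_mem_orthogonal hb hyB, zero_add, zero_add, hinner]
    _ ≤ ‖w‖ * ‖K.starProjection y‖ := (re_le_norm _).trans (norm_inner_le_norm _ _)
    _ ≤ C * ‖y‖ * ‖K.starProjection y‖ := by gcongr
    _ = C * ‖K.starProjection y‖ * ‖y‖ := by ring
  rcases (norm_nonneg y).eq_or_lt with hy0 | hypos
  · rw [eq_comm, norm_eq_zero] at hy0
    simp [hy0]
  · exact le_of_mul_le_mul_right hsq hypos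

variable {S T : Submodule 𝕜 H} [S.HasOrthogonalProjection] [T.HasOrthogonalProjection]

variable (S T) in
def IsSampleConsistentReconstruction (f fhat : H) : Prop :=
  S.starProjection fhat = S.starProjection f ∧
    Sᗮ.starProjection (fhat - T.starProjection fhat) = 0

theorem IsSampleConsistentReconstruction.exists_add_add_eq {f fhat : H}
    (h : IsSampleConsistentReconstruction S T f fhat) :
    ∃ t ∈ T, ∃ u ∈ S ⊓ Tᗮ, ∃ w ∈ Sᗮ, t + u + w = f := by
  obtain ⟨hS, hST⟩ := h
  have huS : fhat - T.starProjection fhat ∈ S := by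
    rw [← S.orthogonal_orthogonal]
    exact (starProjection_apply_eq_zero_iff _).1 hST
  have hw : f - fhat ∈ Sᗮ := by
    rw [← starProjection_apply_eq_zero_iff, map_sub, hS, sub_self]
  exact ⟨_, T.starProjection_apply_mem fhat,
    _, ⟨huS, T.sub_starProjection_mem_orthogonal fhat⟩, _, hw, by abel⟩

theorem norm_starProjection_orthogonal_le {U : Submodule 𝕜 H} [U.HasOrthogonalProjection]
    (hUS : U ≤ S) (hUT : U ≤ Tᗮ) {C : ℝ}
    (hdec : ∀ f, ∃ t ∈ T, ∃ u ∈ U, ∃ w ∈ Sᗮ, t + u + w = f ∧ ‖w‖ ≤ C * ‖f‖)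
    {y : H} (hy : y ∈ Tᗮ) :
    ‖Sᗮ.starProjection y‖ ≤ C * ‖Tᗮ.starProjection (Sᗮ.starProjection y)‖ := by
  set x := Sᗮ.starProjection y
  set y' := y - U.starProjection y
  have hy'T : y' ∈ Tᗮ := sub_mem hy (hUT (U.starProjection_apply_mem y))
  have hx : Sᗮ.starProjection y' = x :=
    starProjection_orthogonal_sub_starProjection_of_le hUS y
  have hy'x : ‖y'‖ ≤ C * ‖x‖ :=
    hx ▸ norm_le_mul_norm_starProjection hdec hy'T (U.sub_starProjection_mem_orthogonal y)
  have hsq : ‖x‖ * ‖x‖ ≤ C * ‖Tᗮ.starProjection x‖ * ‖x‖ := calc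
    ‖x‖ * ‖x‖ = ‖Sᗮ.starProjection y'‖ ^ 2 := by rw [hx, sq]
    _ ≤ ‖Tᗮ.starProjection x‖ * ‖y'‖ := hx ▸ norm_starProjection_sq_le hy'T
    _ ≤ ‖Tᗮ.starProjection x‖ * (C * ‖x‖) := by gcongr
    _ = C * ‖Tᗮ.starProjection x‖ * ‖x‖ := by ring
  rcases (norm_nonneg x).eq_or_lt with hx0 | hxpos
  · rw [eq_comm, norm_eq_zero] at hx0
    simp [hx0]
  · exact le_of_mul_le_mul_right hsq hxpos

end

/-- with `ν := inf {‖P_{T⊥} x‖/‖x‖ : x ∈ P_{S⊥}(T⊥), x ≠ 0}`, if for every `f ∈ H`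
there exists a sample consistent reconstruction of `f` (some `fhat` with `P_S fhat = P_S f` and
`P_{S⊥} P_{T⊥} fhat = 0`), then `ν > 0`.  (The conclusion `ν > 0` is expressed by its standard
meaning: the set of ratios is bounded below by some positive constant; this agrees with
`sInf > 0` for a nonempty set and with the convention `inf ∅ = +∞ > 0`.) -/
theorem stmt_12 {𝕜 H : Type*} [RCLike 𝕜] [NormedAddCommGroup H] [InnerProductSpace 𝕜 H]
    [CompleteSpace H] (S T : Submodule 𝕜 H)
    [S.HasOrthogonalProjection] [T.HasOrthogonalProjection]
    (hex : ∀ f : H, ∃ fhat : H,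
      (S.orthogonalProjectionOnto fhat : H) = (S.orthogonalProjectionOnto f : H) ∧
      (Sᗮ.orthogonalProjectionOnto (fhat - (T.orthogonalProjectionOnto fhat : H)) : H) = 0) :
    ∃ ν : ℝ, 0 < ν ∧
      ∀ r ∈ {r : ℝ | ∃ y ∈ Tᗮ, (Sᗮ.orthogonalProjectionOnto y : H) ≠ 0 ∧
        r = ‖(Tᗮ.orthogonalProjectionOnto ((Sᗮ.orthogonalProjectionOnto y : H)) : H)‖ /
          ‖(Sᗮ.orthogonalProjectionOnto y : H)‖}, ν ≤ r := by
  have : CompleteSpace T := by rw [← T.orthogonal_orthogonal]; infer_instance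
  have : CompleteSpace ↥(S ⊓ Tᗮ) := by
    rw [← S.orthogonal_orthogonal, inf_orthogonal]; infer_instance
  obtain ⟨C, hC, hdec⟩ := exists_add_add_eq_and_norm_le T (S ⊓ Tᗮ) Sᗮ fun f ↦
    IsSampleConsistentReconstruction.exists_add_add_eq (hex f).choose_spec
  refine ⟨C⁻¹, inv_pos.2 hC, ?_⟩
  rintro r ⟨y, hy, hx0, rfl⟩
  rw [le_div_iff₀ (norm_pos_iff.2 hx0), inv_mul_le_iff₀ hC]
  exact norm_starProjection_orthogonal_le inf_le_left inf_le_right hdec hy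
end

section
/- Let ν := inf{‖P_{T⊥} x‖ / ‖x‖ : x ∈ P_{S⊥}(T⊥), x ≠ 0} and suppose ν > 0. For f ∈ H let x̂_n be the minimal-norm element of {x ∈ S⊥ : P_{S⊥} P_{T⊥}(x + P_S f) = 0}. Then both of the following sharp bounds hold: ‖x̂_n‖ ≤ ‖P_{T⊥} P_S P₀ f‖ / ν and ‖x̂_n‖ ≤ ‖P_S P₀ f‖ · √(1 − ν²) / ν. -/
/-!
Write `Q = P_{S⊥}`, `R = P_{T⊥}` and `g = P_S P₀ f`. The operator `Q R P_S` vanishes on the four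
intersections, hence on `H₀⊥`, so `g` may replace `P_S f` in the constraint. Then `R (x̂ + g)` lies
in `S ∩ T⊥` and is orthogonal to `x̂ + g`, so `x̂ + g ∈ T`. Minimality makes `x̂` orthogonal to
`S⊥ ∩ T`, which puts it in the closure of `Q (T⊥)`, where `ν ‖x‖ ≤ ‖R x‖`. As `R x̂ = -R g`, this
is the first bound; the second follows from `‖x̂‖² = ⟪P_T x̂, x̂ + g⟫ ≤ ‖P_T x̂‖ ‖x̂ + g‖` and
`‖P_T x̂‖² ≤ (1 - ν²) ‖x̂‖²`.
-/

open Submodule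

section

variable {𝕜 H : Type*} [RCLike 𝕜] [NormedAddCommGroup H] [InnerProductSpace 𝕜 H]

theorem Submodule.mem_orthogonal_of_forall_norm_le_norm_sub {W : Submodule 𝕜 H} {x : H}
    (h : ∀ w ∈ W, ‖x‖ ≤ ‖x - w‖) : x ∈ Wᗮ := by
  have hinf : ‖x - 0‖ = ⨅ w : W, ‖x - w‖ := by
    refine le_antisymm (le_ciInf fun w => by simpa using h w w.2) ?_
    simpa using ciInf_le ⟨0, Set.forall_mem_range.2 fun w : W => norm_nonneg (x - w)⟩ (0 : W)
  rw [W.norm_eq_iInf_iff_inner_eq_zero W.zero_mem] at hinf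
  exact (W.mem_orthogonal' x).2 (by simpa using hinf)

theorem Submodule.starProjection_mem_orthogonal_of_le {S W : Submodule 𝕜 H}
    [S.HasOrthogonalProjection] (hWS : W ≤ S) {u : H} (hu : u ∈ Wᗮ) :
    S.starProjection u ∈ Wᗮ := fun w hw => by
  rw [← inner_starProjection_left_eq_right, starProjection_eq_self_iff.2 (hWS hw)]
  exact hu w hw

theorem mul_norm_le_of_eq_sInf_div {α E F : Type*} [NormedAddCommGroup E]
    [SeminormedAddGroup F] {A : Set α} {u : α → E} {v : E → F} {ν : ℝ}
    (hν : ν = sInf {r : ℝ | ∃ y ∈ A, u y ≠ 0 ∧ r = ‖v (u y)‖ / ‖u y‖}) {y : α} (hy : y ∈ A) :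
    ν * ‖u y‖ ≤ ‖v (u y)‖ := by
  rcases eq_or_ne (u y) 0 with h0 | h0
  · simp [h0]
  have hbdd : BddBelow {r : ℝ | ∃ y ∈ A, u y ≠ 0 ∧ r = ‖v (u y)‖ / ‖u y‖} :=
    ⟨0, by rintro r ⟨y', -, -, rfl⟩; positivity⟩
  have hle : ν ≤ ‖v (u y)‖ / ‖u y‖ := hν ▸ csInf_le hbdd ⟨y, hy, h0, rfl⟩
  rwa [le_div_iff₀ (norm_pos_iff.2 h0)] at hle

theorem mul_norm_le_norm_of_mem_closure {E F : Type*} [SeminormedAddGroup E]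
    [SeminormedAddGroup F] {L : E → F} (hL : Continuous L) {s : Set E} {c : ℝ}
    (h : ∀ x ∈ s, c * ‖x‖ ≤ ‖L x‖) {x : E} (hx : x ∈ closure s) : c * ‖x‖ ≤ ‖L x‖ :=
  closure_minimal h (isClosed_le (continuous_const.mul continuous_norm) hL.norm) hx

theorem norm_le_norm_mul_sqrt_div_of_add_mem (T : Submodule 𝕜 H) [T.HasOrthogonalProjection]
    {x g : H} {ν : ℝ} (hν : 0 < ν) (hxg : inner 𝕜 x g = 0) (hT : x + g ∈ T)
    (hx : ν * ‖x‖ ≤ ‖Tᗮ.starProjection x‖) : ‖x‖ ≤ ‖g‖ * √(1 - ν ^ 2) / ν := by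
  rcases eq_or_ne x 0 with rfl | hx0
  · simp only [norm_zero]; positivity
  have hxpos := norm_pos_iff.2 hx0
  have hν1 : ν ^ 2 ≤ 1 := by
    have : ν * ‖x‖ ≤ 1 * ‖x‖ := by simpa using hx.trans (Tᗮ.norm_starProjection_apply_le x)
    nlinarith [le_of_mul_le_mul_right this hxpos]
  have hpyth := T.norm_sq_eq_add_norm_sq_starProjection x
  have hsum : ‖x + g‖ ^ 2 = ‖x‖ ^ 2 + ‖g‖ ^ 2 := by
    simpa only [sq] using norm_add_sq_eq_norm_sq_add_norm_sq_of_inner_eq_zero x g hxg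
  have hcs : ‖x‖ ^ 2 ≤ ‖T.starProjection x‖ * ‖x + g‖ :=
    calc ‖x‖ ^ 2 = RCLike.re (inner 𝕜 (T.starProjection x) (x + g)) := by
          rw [inner_starProjection_left_eq_right, starProjection_eq_self_iff.2 hT,
            inner_add_right, hxg, add_zero, inner_self_eq_norm_sq]
      _ ≤ ‖T.starProjection x‖ * ‖x + g‖ := (RCLike.re_le_norm _).trans (norm_inner_le_norm _ _)
  have key : (ν * ‖x‖) ^ 2 ≤ (1 - ν ^ 2) * ‖g‖ ^ 2 := by
    have h4 : ‖x‖ ^ 2 * ‖x‖ ^ 2 ≤ (1 - ν ^ 2) * ‖x‖ ^ 2 * (‖x‖ ^ 2 + ‖g‖ ^ 2) :=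
      calc ‖x‖ ^ 2 * ‖x‖ ^ 2
          ≤ (‖T.starProjection x‖ * ‖x + g‖) * (‖T.starProjection x‖ * ‖x + g‖) :=
            mul_self_le_mul_self (sq_nonneg _) hcs
        _ = ‖T.starProjection x‖ ^ 2 * (‖x‖ ^ 2 + ‖g‖ ^ 2) := by rw [← hsum]; ring
        _ ≤ (1 - ν ^ 2) * ‖x‖ ^ 2 * (‖x‖ ^ 2 + ‖g‖ ^ 2) := by
            gcongr; nlinarith [hpyth, mul_nonneg hν.le (norm_nonneg x)]
    nlinarith [pow_pos hxpos 2]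
  rw [le_div_iff₀ hν, mul_comm, mul_comm ‖g‖, ← Real.sqrt_sq (norm_nonneg g),
    ← Real.sqrt_mul (by linarith)]
  exact Real.le_sqrt_of_sq_le key

variable (S T : Submodule 𝕜 H) [S.HasOrthogonalProjection] [T.HasOrthogonalProjection]

theorem mem_topologicalClosure_map_starProjection [CompleteSpace H] {x : H} (hxS : x ∈ Sᗮ)
    (hxT : x ∈ (Sᗮ ⊓ T)ᗮ) :
    x ∈ (Tᗮ.map (Sᗮ.starProjection : H →ₗ[𝕜] H)).topologicalClosure := by
  rw [← orthogonal_orthogonal_eq_closure]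
  intro w hw
  have hwT : Sᗮ.starProjection w ∈ T := by
    rw [← T.orthogonal_orthogonal]
    intro y hy
    rw [← inner_starProjection_left_eq_right]
    exact hw _ ⟨y, hy, rfl⟩
  rw [← S.starProjection_add_starProjection_orthogonal w, inner_add_left,
    inner_right_of_mem_orthogonal (S.starProjection_apply_mem w) hxS,
    inner_right_of_mem_orthogonal (K := Sᗮ ⊓ T) ⟨Sᗮ.starProjection_apply_mem w, hwT⟩ hxT,
    add_zero]

/-- The subspace `H₀`. -/
abbrev genericPart : Submodule 𝕜 H := (S ⊓ T ⊔ Sᗮ ⊓ T ⊔ S ⊓ Tᗮ ⊔ Sᗮ ⊓ Tᗮ)ᗮ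

theorem comp_starProjection_genericPart [CompleteSpace H] :
    (Sᗮ.starProjection ∘L Tᗮ.starProjection ∘L S.starProjection) ∘L
        (genericPart S T).starProjection =
      Sᗮ.starProjection ∘L Tᗮ.starProjection ∘L S.starProjection := by
  set E := Sᗮ.starProjection ∘L Tᗮ.starProjection ∘L S.starProjection
  have hK : S ⊓ T ⊔ Sᗮ ⊓ T ⊔ S ⊓ Tᗮ ⊔ Sᗮ ⊓ Tᗮ ≤ LinearMap.ker (E : H →ₗ[𝕜] H) := by
    have hPS : ∀ v ∈ Sᗮ, S.starProjection v = 0 := fun v hv =>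
      (starProjection_apply_eq_zero_iff S).2 hv
    have hR : ∀ v ∈ T, Tᗮ.starProjection v = 0 := fun v hv =>
      (starProjection_apply_eq_zero_iff Tᗮ).2 (T.le_orthogonal_orthogonal hv)
    refine sup_le (sup_le (sup_le ?_ ?_) ?_) ?_ <;> rintro v ⟨hvS, hvT⟩ <;>
      simp only [E, LinearMap.mem_ker, ContinuousLinearMap.coe_coe, ContinuousLinearMap.comp_apply]
    · rw [starProjection_eq_self_iff.2 hvS, hR v hvT, map_zero]
    · rw [hPS v hvS, map_zero, map_zero]
    · rw [starProjection_eq_self_iff.2 hvS, starProjection_eq_self_iff.2 hvT,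
        (starProjection_apply_eq_zero_iff Sᗮ).2 (S.le_orthogonal_orthogonal hvS)]
    · rw [hPS v hvS, map_zero, map_zero]
  have hKK : (genericPart S T)ᗮ ≤ LinearMap.ker (E : H →ₗ[𝕜] H) := by
    rw [orthogonal_orthogonal_eq_closure]
    exact topologicalClosure_minimal _ hK (ContinuousLinearMap.isClosed_ker E)
  ext f
  have h := hKK ((genericPart S T)ᗮ.starProjection_apply_mem f)
  rw [LinearMap.mem_ker, ContinuousLinearMap.coe_coe, starProjection_orthogonal_val,
    map_sub, sub_eq_zero] at h
  exact h.symm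

theorem mem_of_starProjection_orthogonal_starProjection_orthogonal_eq_zero {z : H}
    (hz : z ∈ (S ⊓ Tᗮ)ᗮ) (h : Sᗮ.starProjection (Tᗮ.starProjection z) = 0) : z ∈ T := by
  have hRz : Tᗮ.starProjection z ∈ S ⊓ Tᗮ := by
    refine ⟨?_, Tᗮ.starProjection_apply_mem z⟩
    rw [← S.orthogonal_orthogonal]
    exact (starProjection_apply_eq_zero_iff Sᗮ).1 h
  have h0 : inner 𝕜 (Tᗮ.starProjection z) (Tᗮ.starProjection z) = 0 := by
    rw [inner_starProjection_left_eq_right,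
      starProjection_eq_self_iff.2 (Tᗮ.starProjection_apply_mem z)]
    exact inner_left_of_mem_orthogonal hRz hz
  rw [← T.orthogonal_orthogonal, ← starProjection_apply_eq_zero_iff Tᗮ]
  exact inner_self_eq_zero.1 h0

end

/-- with `ν := inf {‖P_{T⊥} x‖/‖x‖ : x ∈ P_{S⊥}(T⊥), x ≠ 0} > 0` and `xn` the
minimal-norm element of `{x ∈ S⊥ : P_{S⊥} P_{T⊥}(x + P_S f) = 0}`, the sharp bounds
`‖xn‖ ≤ ‖P_{T⊥} P_S P₀ f‖/ν` and `‖xn‖ ≤ ‖P_S P₀ f‖ √(1 − ν²)/ν` hold, where `P₀` is the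
orthogonal projection onto `H₀`, the orthogonal complement of the subspace spanned by
`S∩T`, `S⊥∩T`, `S∩T⊥` and `S⊥∩T⊥`. -/
theorem stmt_13 {𝕜 H : Type*} [RCLike 𝕜] [NormedAddCommGroup H] [InnerProductSpace 𝕜 H]
    [CompleteSpace H] (S T : Submodule 𝕜 H)
    [Submodule.HasOrthogonalProjection S] [Submodule.HasOrthogonalProjection T]
    (ν : ℝ)
    (hν : ν = sInf {r : ℝ | ∃ y ∈ Tᗮ, (Submodule.orthogonalProjectionOnto Sᗮ y : H) ≠ 0 ∧
      r = ‖(Submodule.orthogonalProjectionOnto Tᗮ ((Submodule.orthogonalProjectionOnto Sᗮ y : H)) : H)‖ /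
        ‖(Submodule.orthogonalProjectionOnto Sᗮ y : H)‖})
    (hνpos : 0 < ν) (f : H) (xn : H)
    (hxn : xn ∈ Sᗮ ∧
      (Submodule.orthogonalProjectionOnto Sᗮ ((xn + (Submodule.orthogonalProjectionOnto S f : H)) -
        (Submodule.orthogonalProjectionOnto T (xn + (Submodule.orthogonalProjectionOnto S f : H)) : H)) : H) = 0 ∧
      ∀ x : H, x ∈ Sᗮ →
        (Submodule.orthogonalProjectionOnto Sᗮ ((x + (Submodule.orthogonalProjectionOnto S f : H)) -
          (Submodule.orthogonalProjectionOnto T (x + (Submodule.orthogonalProjectionOnto S f : H)) : H)) : H) = 0 →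
        ‖xn‖ ≤ ‖x‖) :
    ‖xn‖ ≤ ‖(Submodule.orthogonalProjectionOnto Tᗮ ((Submodule.orthogonalProjectionOnto S
        ((Submodule.orthogonalProjectionOnto ((S ⊓ T) ⊔ (Sᗮ ⊓ T) ⊔ (S ⊓ Tᗮ) ⊔ (Sᗮ ⊓ Tᗮ))ᗮ f : H)) : H)) : H)‖ / ν ∧
    ‖xn‖ ≤ ‖(Submodule.orthogonalProjectionOnto S
        ((Submodule.orthogonalProjectionOnto ((S ⊓ T) ⊔ (Sᗮ ⊓ T) ⊔ (S ⊓ Tᗮ) ⊔ (Sᗮ ⊓ Tᗮ))ᗮ f : H)) : H)‖ *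
      Real.sqrt (1 - ν ^ 2) / ν := by
  simp only [coe_orthogonalProjectionOnto_apply, ← starProjection_orthogonal_val] at hν hxn ⊢
  obtain ⟨hxnS, hfeas, hmin⟩ := hxn
  change ‖xn‖ ≤ ‖Tᗮ.starProjection (S.starProjection ((genericPart S T).starProjection f))‖ / ν ∧
    ‖xn‖ ≤ ‖S.starProjection ((genericPart S T).starProjection f)‖ * √(1 - ν ^ 2) / ν
  set g := S.starProjection ((genericPart S T).starProjection f)
  have hfeas_g : Sᗮ.starProjection (Tᗮ.starProjection (xn + g)) = 0 := by
    have h := congrArg (· f) (comp_starProjection_genericPart S T)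
    simp only [ContinuousLinearMap.comp_apply] at h
    rwa [map_add, map_add, h, ← map_add, ← map_add]
  have hxg : xn + g ∈ T := by
    refine mem_of_starProjection_orthogonal_starProjection_orthogonal_eq_zero S T
      (add_mem (orthogonal_le inf_le_left hxnS) ?_) hfeas_g
    exact starProjection_mem_orthogonal_of_le inf_le_left
      (orthogonal_le (le_sup_right.trans le_sup_left)
        ((genericPart S T).starProjection_apply_mem f))
  have hxn_closure : xn ∈ (Tᗮ.map (Sᗮ.starProjection : H →ₗ[𝕜] H)).topologicalClosure := by
    refine mem_topologicalClosure_map_starProjection S T hxnS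
      (mem_orthogonal_of_forall_norm_le_norm_sub fun w hw => hmin _ (sub_mem hxnS hw.1) ?_)
    rw [sub_add_eq_add_sub, map_sub, map_sub, hfeas,
      (starProjection_apply_eq_zero_iff Tᗮ).2 (T.le_orthogonal_orthogonal hw.2), map_zero, sub_zero]
  have hνxn : ν * ‖xn‖ ≤ ‖Tᗮ.starProjection xn‖ :=
    mul_norm_le_norm_of_mem_closure (Tᗮ.starProjection).continuous
      (by rintro _ ⟨y, hy, rfl⟩; exact mul_norm_le_of_eq_sInf_div hν hy) hxn_closure
  have hRxn : Tᗮ.starProjection xn = -Tᗮ.starProjection g := by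
    rw [eq_neg_iff_add_eq_zero, ← map_add, starProjection_apply_eq_zero_iff,
      T.orthogonal_orthogonal]
    exact hxg
  refine ⟨(le_div_iff₀ hνpos).2 ?_, norm_le_norm_mul_sqrt_div_of_add_mem T hνpos
    (inner_left_of_mem_orthogonal (S.starProjection_apply_mem _) hxnS) hxg hνxn⟩
  rwa [mul_comm, hRxn, norm_neg] at hνxn
end

section
/- Let ν := inf{‖P_{T⊥} x‖ / ‖x‖ : x ∈ P_{S⊥}(T⊥), x ≠ 0}, suppose ν > 0, let f ∈ H, let x̂_n be the minimal-norm element of {x ∈ S⊥ : P_{S⊥} P_{T⊥}(x + P_S f) = 0}, and let f̂_n = x̂_n + P_S f. Then the exact error decomposition ‖f̂_n − f‖² = ‖P_{S⊥∩T} f‖² + ‖P_{S⊥∩T⊥} f‖² + ‖x̂_n − P_{S⊥} P₀ f‖² holds. -/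
set_option synthInstance.maxHeartbeats 1000000

/-!
Write `a = P_{S⊥∩T} f`, `b = P_{S⊥∩T⊥} f` and `q = P_{S⊥} P₀ f`. The vector `f - P₀ f` lies in the
closure of the sum of the four intersections, on which `P_{S⊥}` agrees with
`P_{S⊥∩T} + P_{S⊥∩T⊥}`; hence `P_{S⊥} f = a + b + q` and `f̂ₙ - f = (x̂ₙ - q) - (a + b)`.
Translating `x̂ₙ` by an element of `S⊥∩T` keeps the constraint, so minimality makes `x̂ₙ ⊥ S⊥∩T`;
testing the constraint against `S⊥∩T⊥` gives `x̂ₙ ⊥ S⊥∩T⊥`; and `q` is orthogonal to both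
because `P₀ f` is. Pythagoras then gives the identity.
-/

namespace Submodule

open InnerProductSpace

variable {𝕜 E : Type*} [RCLike 𝕜] [NormedAddCommGroup E] [InnerProductSpace 𝕜 E]

theorem mem_orthogonal_of_forall_norm_le_norm_sub_s14 (K : Submodule 𝕜 E) [K.HasOrthogonalProjection]
    {u : E} (h : ∀ w ∈ K, ‖u‖ ≤ ‖u - w‖) : u ∈ Kᗮ := by
  have hle : ‖u‖ ≤ ‖Kᗮ.starProjection u‖ := by
    simpa [starProjection_orthogonal_val] using h _ (K.starProjection_apply_mem u)
  have hsplit := norm_sq_eq_add_norm_sq_starProjection u K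
  have hzero : ‖K.starProjection u‖ ^ 2 = 0 := by
    nlinarith [norm_nonneg u, norm_nonneg (K.starProjection u), norm_nonneg (Kᗮ.starProjection u)]
  exact (K.starProjection_apply_eq_zero_iff).mp (by simpa using hzero)

theorem mem_orthogonal_inf_orthogonal_of_starProjection_sub_eq_zero {K L : Submodule 𝕜 E}
    [K.HasOrthogonalProjection] [L.HasOrthogonalProjection] {y : E}
    (h : K.starProjection (y - L.starProjection y) = 0) : y ∈ (K ⊓ Lᗮ)ᗮ := by
  intro z hz
  have hLz : ⟪z, L.starProjection y⟫_𝕜 = 0 := by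
    rw [← inner_starProjection_left_eq_right, (L.starProjection_apply_eq_zero_iff).mpr hz.2,
      inner_zero_left]
  calc ⟪z, y⟫_𝕜 = ⟪z, K.starProjection (y - L.starProjection y)⟫_𝕜 := by
        rw [← inner_starProjection_left_eq_right, starProjection_eq_self_iff.mpr hz.1,
          inner_sub_right, hLz, sub_zero]
    _ = 0 := by rw [h, inner_zero_right]

theorem starProjection_mem_orthogonal_of_le_s14 {K M W : Submodule 𝕜 E} [K.HasOrthogonalProjection]
    (hMK : M ≤ K) (hMW : M ≤ W) {p : E} (hp : p ∈ Wᗮ) : K.starProjection p ∈ Mᗮ := by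
  intro z hz
  rw [← inner_starProjection_left_eq_right, starProjection_eq_self_iff.mpr (hMK hz)]
  exact hp z (hMW hz)

theorem starProjection_eq_add_of_mem_topologicalClosure_sup {K M N : Submodule 𝕜 E}
    [K.HasOrthogonalProjection] [M.HasOrthogonalProjection] [N.HasOrthogonalProjection]
    (hMK : M ≤ K) (hNK : N ≤ K) (hMN : M ⟂ N) {g : E}
    (hg : g ∈ (Kᗮ ⊔ M ⊔ N).topologicalClosure) :
    K.starProjection g = M.starProjection g + N.starProjection g := by
  set φ : E →L[𝕜] E := K.starProjection - M.starProjection - N.starProjection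
  have hφ : Kᗮ ⊔ M ⊔ N ≤ LinearMap.ker (φ : E →ₗ[𝕜] E) := by
    refine sup_le (sup_le ?_ ?_) ?_ <;> intro z hz <;>
      simp only [LinearMap.mem_ker, ContinuousLinearMap.coe_coe, φ, sub_apply]
    · rw [(K.starProjection_apply_eq_zero_iff).mpr hz,
        (M.starProjection_apply_eq_zero_iff).mpr (orthogonal_le hMK hz),
        (N.starProjection_apply_eq_zero_iff).mpr (orthogonal_le hNK hz), sub_zero, sub_zero]
    · rw [starProjection_eq_self_iff.mpr (hMK hz), starProjection_eq_self_iff.mpr hz,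
        (N.starProjection_apply_eq_zero_iff).mpr (isOrtho_iff_le.mp hMN hz), sub_self, sub_zero]
    · rw [starProjection_eq_self_iff.mpr (hNK hz), starProjection_eq_self_iff.mpr hz,
        (M.starProjection_apply_eq_zero_iff).mpr (isOrtho_iff_le.mp hMN.symm hz), sub_zero,
        sub_self]
  have hφg : φ g = 0 := (Kᗮ ⊔ M ⊔ N).topologicalClosure_minimal hφ φ.isClosed_ker hg
  rwa [sub_apply, sub_apply, sub_sub, sub_eq_zero] at hφg

theorem sub_starProjection_sub_of_mem (K : Submodule 𝕜 E) [K.HasOrthogonalProjection] {w : E}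
    (hw : w ∈ K) (v : E) : v - w - K.starProjection (v - w) = v - K.starProjection v := by
  rw [map_sub, starProjection_eq_self_iff.mpr hw]
  abel

theorem norm_sub_add_sq_of_isOrtho {M N : Submodule 𝕜 E} (hMN : M ⟂ N) {u a b : E}
    (ha : a ∈ M) (hb : b ∈ N) (huM : u ∈ Mᗮ) (huN : u ∈ Nᗮ) :
    ‖u - (a + b)‖ ^ 2 = ‖a‖ ^ 2 + ‖b‖ ^ 2 + ‖u‖ ^ 2 := by
  have hu : ⟪u, a + b⟫_𝕜 = 0 := by
    rw [inner_add_right, (mem_orthogonal' M u).mp huM a ha, (mem_orthogonal' N u).mp huN b hb,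
      add_zero]
  rw [@norm_sub_sq 𝕜, @norm_add_sq 𝕜, hu, hMN.inner_eq ha hb]
  simp only [map_zero, mul_zero, sub_zero, add_zero]
  ring

theorem starProjection_orthogonal_eq_add [CompleteSpace E] (S T : Submodule 𝕜 E)
    [S.HasOrthogonalProjection] [(Sᗮ ⊓ T).HasOrthogonalProjection]
    [(Sᗮ ⊓ Tᗮ).HasOrthogonalProjection] (f : E) :
    Sᗮ.starProjection f = (Sᗮ ⊓ T).starProjection f + (Sᗮ ⊓ Tᗮ).starProjection f +
      Sᗮ.starProjection ((S ⊓ T ⊔ Sᗮ ⊓ T ⊔ S ⊓ Tᗮ ⊔ Sᗮ ⊓ Tᗮ)ᗮ.starProjection f) := by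
  set W := S ⊓ T ⊔ Sᗮ ⊓ T ⊔ S ⊓ Tᗮ ⊔ Sᗮ ⊓ Tᗮ
  set p := Wᗮ.starProjection f
  have hW : W ≤ Sᗮᗮ ⊔ Sᗮ ⊓ T ⊔ Sᗮ ⊓ Tᗮ := by
    rw [S.orthogonal_orthogonal]
    exact sup_le_sup_right
      (sup_le (sup_le_sup_right inf_le_left _) (le_sup_left.trans' inf_le_left)) _
  have hfp : f - p ∈ (Sᗮᗮ ⊔ Sᗮ ⊓ T ⊔ Sᗮ ⊓ Tᗮ).topologicalClosure := by
    refine topologicalClosure_mono hW ?_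
    rw [← orthogonal_orthogonal_eq_closure]
    exact sub_starProjection_mem_orthogonal f
  have hBD : Sᗮ ⊓ T ⟂ Sᗮ ⊓ Tᗮ :=
    (isOrtho_orthogonal_right T).mono inf_le_right inf_le_right
  have hsplit :=
    starProjection_eq_add_of_mem_topologicalClosure_sup inf_le_left inf_le_left hBD hfp
  have hpB : (Sᗮ ⊓ T).starProjection p = 0 :=
    ((Sᗮ ⊓ T).starProjection_apply_eq_zero_iff).mpr
      (orthogonal_le (le_sup_right.trans (le_sup_left.trans le_sup_left))
        (starProjection_apply_mem _ f))
  have hpD : (Sᗮ ⊓ Tᗮ).starProjection p = 0 :=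
    ((Sᗮ ⊓ Tᗮ).starProjection_apply_eq_zero_iff).mpr
      (orthogonal_le le_sup_right (starProjection_apply_mem _ f))
  rw [map_sub, map_sub, map_sub, hpB, hpD, sub_zero, sub_zero] at hsplit
  rw [← hsplit]
  abel

end Submodule

theorem stmt_14_general {𝕜 H : Type*} [RCLike 𝕜] [NormedAddCommGroup H] [InnerProductSpace 𝕜 H]
    [CompleteSpace H] (S T : Submodule 𝕜 H)
    [Submodule.HasOrthogonalProjection S] [Submodule.HasOrthogonalProjection T]
    [Submodule.HasOrthogonalProjection (Sᗮ ⊓ T)] [Submodule.HasOrthogonalProjection (Sᗮ ⊓ Tᗮ)]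
    (f : H) (xn : H)
    (hxn : xn ∈ Sᗮ ∧
      (Submodule.orthogonalProjectionOnto Sᗮ ((xn + (Submodule.orthogonalProjectionOnto S f : H)) -
        (Submodule.orthogonalProjectionOnto T (xn + (Submodule.orthogonalProjectionOnto S f : H)) : H)) : H) = 0 ∧
      ∀ x : H, x ∈ Sᗮ →
        (Submodule.orthogonalProjectionOnto Sᗮ ((x + (Submodule.orthogonalProjectionOnto S f : H)) -
          (Submodule.orthogonalProjectionOnto T (x + (Submodule.orthogonalProjectionOnto S f : H)) : H)) : H) = 0 →
        ‖xn‖ ≤ ‖x‖) :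
    ‖(xn + (Submodule.orthogonalProjectionOnto S f : H)) - f‖ ^ 2 =
      ‖(Submodule.orthogonalProjectionOnto (Sᗮ ⊓ T) f : H)‖ ^ 2 +
      ‖(Submodule.orthogonalProjectionOnto (Sᗮ ⊓ Tᗮ) f : H)‖ ^ 2 +
      ‖xn - (Submodule.orthogonalProjectionOnto Sᗮ
        ((Submodule.orthogonalProjectionOnto ((S ⊓ T) ⊔ (Sᗮ ⊓ T) ⊔ (S ⊓ Tᗮ) ⊔ (Sᗮ ⊓ Tᗮ))ᗮ f : H)) : H)‖ ^ 2 := by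
  open Submodule in
  obtain ⟨hxnS, hcon, hmin⟩ := hxn
  simp only [coe_orthogonalProjectionOnto_apply] at hcon hmin ⊢
  set c := S.starProjection f
  have hsplit := starProjection_orthogonal_eq_add S T f
  set q := Sᗮ.starProjection
    ((S ⊓ T ⊔ Sᗮ ⊓ T ⊔ S ⊓ Tᗮ ⊔ Sᗮ ⊓ Tᗮ)ᗮ.starProjection f)
  have hxnB : xn ∈ (Sᗮ ⊓ T)ᗮ := by
    refine mem_orthogonal_of_forall_norm_le_norm_sub_s14 _ fun w hw ↦
      hmin (xn - w) (sub_mem hxnS hw.1) ?_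
    rwa [show xn - w + c = xn + c - w by abel, sub_starProjection_sub_of_mem T hw.2]
  have hxnD : xn ∈ (Sᗮ ⊓ Tᗮ)ᗮ := by
    have hcD : c ∈ (Sᗮ ⊓ Tᗮ)ᗮ :=
      orthogonal_le inf_le_left (S.le_orthogonal_orthogonal (starProjection_apply_mem S f))
    simpa only [add_sub_cancel_right] using
      sub_mem (mem_orthogonal_inf_orthogonal_of_starProjection_sub_eq_zero hcon) hcD
  have hqB : q ∈ (Sᗮ ⊓ T)ᗮ := starProjection_mem_orthogonal_of_le_s14 inf_le_left
    (le_sup_right.trans (le_sup_left.trans le_sup_left)) (starProjection_apply_mem _ f)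
  have hqD : q ∈ (Sᗮ ⊓ Tᗮ)ᗮ :=
    starProjection_mem_orthogonal_of_le_s14 inf_le_left le_sup_right (starProjection_apply_mem _ f)
  calc ‖xn + c - f‖ ^ 2
      = ‖(xn - q) - ((Sᗮ ⊓ T).starProjection f + (Sᗮ ⊓ Tᗮ).starProjection f)‖ ^ 2 := by
        rw [show xn + c - f = xn - (f - c) by abel, ← starProjection_orthogonal_val, hsplit]
        abel_nf
    _ = _ := norm_sub_add_sq_of_isOrtho
        ((isOrtho_orthogonal_right T).mono inf_le_right inf_le_right)
        (starProjection_apply_mem _ f) (starProjection_apply_mem _ f)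
        (sub_mem hxnB hqB) (sub_mem hxnD hqD)

/-- with `ν := inf {‖P_{T⊥} x‖/‖x‖ : x ∈ P_{S⊥}(T⊥), x ≠ 0} > 0`, `xn` the
minimal-norm element of `{x ∈ S⊥ : P_{S⊥} P_{T⊥}(x + P_S f) = 0}` and `fn = xn + P_S f`, the
exact error decomposition
`‖fn − f‖² = ‖P_{S⊥∩T} f‖² + ‖P_{S⊥∩T⊥} f‖² + ‖xn − P_{S⊥} P₀ f‖²` holds. -/
theorem stmt_14 {𝕜 H : Type*} [RCLike 𝕜] [NormedAddCommGroup H] [InnerProductSpace 𝕜 H]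
    [CompleteSpace H] (S T : Submodule 𝕜 H)
    [Submodule.HasOrthogonalProjection S] [Submodule.HasOrthogonalProjection T]
    [Submodule.HasOrthogonalProjection (Sᗮ ⊓ T)] [Submodule.HasOrthogonalProjection (Sᗮ ⊓ Tᗮ)]
    (ν : ℝ)
    (hν : ν = sInf {r : ℝ | ∃ y ∈ Tᗮ, (Submodule.orthogonalProjectionOnto Sᗮ y : H) ≠ 0 ∧
      r = ‖(Submodule.orthogonalProjectionOnto Tᗮ ((Submodule.orthogonalProjectionOnto Sᗮ y : H)) : H)‖ /
        ‖(Submodule.orthogonalProjectionOnto Sᗮ y : H)‖})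
    (hνpos : 0 < ν) (f : H) (xn : H)
    (hxn : xn ∈ Sᗮ ∧
      (Submodule.orthogonalProjectionOnto Sᗮ ((xn + (Submodule.orthogonalProjectionOnto S f : H)) -
        (Submodule.orthogonalProjectionOnto T (xn + (Submodule.orthogonalProjectionOnto S f : H)) : H)) : H) = 0 ∧
      ∀ x : H, x ∈ Sᗮ →
        (Submodule.orthogonalProjectionOnto Sᗮ ((x + (Submodule.orthogonalProjectionOnto S f : H)) -
          (Submodule.orthogonalProjectionOnto T (x + (Submodule.orthogonalProjectionOnto S f : H)) : H)) : H) = 0 →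
        ‖xn‖ ≤ ‖x‖) :
    ‖(xn + (Submodule.orthogonalProjectionOnto S f : H)) - f‖ ^ 2 =
      ‖(Submodule.orthogonalProjectionOnto (Sᗮ ⊓ T) f : H)‖ ^ 2 +
      ‖(Submodule.orthogonalProjectionOnto (Sᗮ ⊓ Tᗮ) f : H)‖ ^ 2 +
      ‖xn - (Submodule.orthogonalProjectionOnto Sᗮ
        ((Submodule.orthogonalProjectionOnto ((S ⊓ T) ⊔ (Sᗮ ⊓ T) ⊔ (S ⊓ Tᗮ) ⊔ (Sᗮ ⊓ Tᗮ))ᗮ f : H)) : H)‖ ^ 2 :=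
  stmt_14_general S T f xn hxn
end

section
/- Let ν := inf{‖P_{T⊥} x‖ / ‖x‖ : x ∈ P_{S⊥}(T⊥), x ≠ 0}, suppose ν > 0, let f ∈ H, let x̂_n be the minimal-norm element of {x ∈ S⊥ : P_{S⊥} P_{T⊥}(x + P_S f) = 0}, let f̂ be any sample consistent reconstruction of f, and let M be the orthogonal projection onto (S⊥ ∩ T)⊥. Then ‖M(f̂ − f)‖² = ‖P_{S⊥∩T⊥} f‖² + ‖x̂_n − P_{S⊥} P₀ f‖², and the following sharp bounds hold: ‖x̂_n − P_{S⊥} P₀ f‖ ≤ ‖P_{S⊥} P_{T⊥} P₀ f‖ / ν² and ‖x̂_n − P_{S⊥} P₀ f‖ ≤ ‖P_{T⊥} P₀ f‖ / ν. -/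
/-!
Write `P = P_{S⊥}`, `Q = P_{T⊥}`. On the four intersections `S ∩ T, S⊥ ∩ T, S ∩ T⊥, S⊥ ∩ T⊥`
both projections act as `0` or `1`, so every identity between continuous linear maps built from
them can be checked there, and then holds on the closure of their sum, i.e. modulo `H₀`.

If `v ∈ S⊥` and `P Q v = 0`, then `‖Q v‖² = Re ⟪P Q v, v⟫ = 0`, so `v ∈ S⊥ ∩ T`. Hence the
solutions `x ∈ S⊥` of `P Q (x + P_S f) = 0` differ by elements of `S⊥ ∩ T`, they are orthogonal
to `S⊥ ∩ T⊥` (as `Q P` fixes that space), and the minimal-norm one is orthogonal to `S⊥ ∩ T`.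
For `u = x̂ₙ - P P₀ f` this gives `M (f̂ - f) = u - P_{S⊥∩T⊥} f` with orthogonal summands, and
`P Q u = - P Q P₀ f`. Then `‖Q u‖² = -Re ⟪P Q P₀ f, u⟫ = -Re ⟪Q P₀ f, Q u⟫`, while
`ν ‖u‖ ≤ ‖Q u‖` because `u` lies in the closure of `P (T⊥)`.
-/

set_option synthInstance.maxHeartbeats 1000000

open scoped InnerProductSpace

namespace Submodule

variable {𝕜 E : Type*} [RCLike 𝕜] [NormedAddCommGroup E] [InnerProductSpace 𝕜 E]

scoped instance hasOrthogonalProjection_inf [CompleteSpace E] (U V : Submodule 𝕜 E)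
    [U.HasOrthogonalProjection] [V.HasOrthogonalProjection] :
    (U ⊓ V).HasOrthogonalProjection := by
  have hU : IsClosed (U : Set E) := U.orthogonal_orthogonal ▸ Uᗮ.isClosed_orthogonal
  have hV : IsClosed (V : Set E) := V.orthogonal_orthogonal ▸ Vᗮ.isClosed_orthogonal
  have : CompleteSpace (U ⊓ V : Submodule 𝕜 E) := (hU.inter hV).completeSpace_coe
  infer_instance

theorem mem_orthogonal_of_norm_le_norm_starProjection_orthogonal {W : Submodule 𝕜 E}
    [W.HasOrthogonalProjection] {x : E} (h : ‖x‖ ≤ ‖Wᗮ.starProjection x‖) : x ∈ Wᗮ := by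
  have hsq := norm_sq_eq_add_norm_sq_starProjection x W
  have : ‖W.starProjection x‖ = 0 := by
    nlinarith [norm_nonneg x, norm_nonneg (W.starProjection x)]
  rwa [norm_eq_zero, starProjection_apply_eq_zero_iff] at this

theorem map_starProjection_orthogonal [CompleteSpace E] {F : Type*} [NormedAddCommGroup F]
    [InnerProductSpace 𝕜 F] {K : Submodule 𝕜 E} (L : E →L[𝕜] F)
    (hK : K ≤ LinearMap.ker (L : E →ₗ[𝕜] F)) (x : E) : L (Kᗮ.starProjection x) = L x := by
  have hcl : Kᗮᗮ ≤ LinearMap.ker (L : E →ₗ[𝕜] F) := by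
    rw [orthogonal_orthogonal_eq_closure]
    exact topologicalClosure_minimal _ hK L.isClosed_ker
  have h0 : L (Kᗮᗮ.starProjection x) = 0 := hcl (starProjection_apply_mem _ x)
  conv_rhs => rw [← Kᗮ.starProjection_add_starProjection_orthogonal x]
  rw [map_add, h0, add_zero]

section TwoProjections

variable {U V : Submodule 𝕜 E} [U.HasOrthogonalProjection] [V.HasOrthogonalProjection]

theorem starProjection_mem_orthogonal_of_le_s15 {W : Submodule 𝕜 E} (hWU : W ≤ U) {v : E}
    (hv : v ∈ Wᗮ) : U.starProjection v ∈ Wᗮ := by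
  intro w hw
  rw [← inner_starProjection_left_eq_right, starProjection_eq_self_iff.mpr (hWU hw)]
  exact hv w hw

theorem mem_orthogonal_inf_of_starProjection_starProjection_eq_zero {w : E}
    (h : U.starProjection (V.starProjection w) = 0) : w ∈ (U ⊓ V)ᗮ := by
  intro x hx
  rw [← starProjection_eq_self_iff.mpr (mem_inf.mp hx).2, inner_starProjection_left_eq_right,
    ← starProjection_eq_self_iff.mpr (mem_inf.mp hx).1, inner_starProjection_left_eq_right, h,
    inner_zero_right]

theorem inner_starProjection_starProjection_of_mem {u : E} (hu : u ∈ U) (g : E) :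
    ⟪U.starProjection (V.starProjection g), u⟫_𝕜 =
      ⟪V.starProjection g, V.starProjection u⟫_𝕜 := by
  rw [inner_starProjection_left_eq_right, starProjection_eq_self_iff.mpr hu,
    ← inner_starProjection_left_eq_right,
    starProjection_eq_self_iff.mpr (V.starProjection_apply_mem g)]

theorem norm_sq_starProjection_eq_re_inner {u : E} (hu : u ∈ U) :
    ‖V.starProjection u‖ ^ 2 = RCLike.re ⟪U.starProjection (V.starProjection u), u⟫_𝕜 := by
  rw [inner_starProjection_starProjection_of_mem hu, inner_self_eq_norm_sq]

theorem mem_orthogonal_of_mem_of_starProjection_starProjection_eq_zero {u : E} (hu : u ∈ U)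
    (h : U.starProjection (V.starProjection u) = 0) : u ∈ Vᗮ := by
  have : ‖V.starProjection u‖ ^ 2 = 0 := by
    rw [norm_sq_starProjection_eq_re_inner hu, h, inner_zero_left, map_zero]
  rwa [sq_eq_zero_iff, norm_eq_zero, starProjection_apply_eq_zero_iff] at this

theorem norm_sq_starProjection_le_of_eq_neg {u g : E} (hu : u ∈ U)
    (h : U.starProjection (V.starProjection u) = -U.starProjection (V.starProjection g)) :
    ‖V.starProjection u‖ ^ 2 ≤ ‖U.starProjection (V.starProjection g)‖ * ‖u‖ := by
  rw [norm_sq_starProjection_eq_re_inner hu, h, inner_neg_left, map_neg]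
  exact (neg_le_abs _).trans ((RCLike.abs_re_le_norm _).trans (norm_inner_le_norm _ _))

theorem norm_starProjection_le_of_eq_neg {u g : E} (hu : u ∈ U)
    (h : U.starProjection (V.starProjection u) = -U.starProjection (V.starProjection g)) :
    ‖V.starProjection u‖ ≤ ‖V.starProjection g‖ := by
  have hsq : ‖V.starProjection u‖ ^ 2 ≤ ‖V.starProjection g‖ * ‖V.starProjection u‖ := by
    rw [norm_sq_starProjection_eq_re_inner hu, h, inner_neg_left, map_neg,
      inner_starProjection_starProjection_of_mem hu]
    exact (neg_le_abs _).trans ((RCLike.abs_re_le_norm _).trans (norm_inner_le_norm _ _))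
  nlinarith [norm_nonneg (V.starProjection u), norm_nonneg (V.starProjection g)]

end TwoProjections

/-- The subspace `H₀`. -/
abbrev genericPart (S T : Submodule 𝕜 E) : Submodule 𝕜 E :=
  (S ⊓ T ⊔ Sᗮ ⊓ T ⊔ S ⊓ Tᗮ ⊔ Sᗮ ⊓ Tᗮ)ᗮ

scoped instance hasOrthogonalProjection_genericPart [CompleteSpace E] (S T : Submodule 𝕜 E) :
    (genericPart S T).HasOrthogonalProjection :=
  HasOrthogonalProjection.ofCompleteSpace _

theorem genericPart_le_orthogonal_inf {S T : Submodule 𝕜 E} : genericPart S T ≤ (Sᗮ ⊓ T)ᗮ :=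
  orthogonal_le (le_sup_right.trans (le_sup_left.trans le_sup_left))

theorem genericPart_le_orthogonal_inf_orthogonal {S T : Submodule 𝕜 E} :
    genericPart S T ≤ (Sᗮ ⊓ Tᗮ)ᗮ :=
  orthogonal_le le_sup_right

theorem starProjection_orthogonal_mem_of_mem_genericPart {S T : Submodule 𝕜 E}
    [S.HasOrthogonalProjection] {g : E} (hg : g ∈ genericPart S T) :
    Sᗮ.starProjection g ∈ (Sᗮ ⊓ T)ᗮ ⊓ (Sᗮ ⊓ Tᗮ)ᗮ :=
  mem_inf.mpr ⟨starProjection_mem_orthogonal_of_le_s15 inf_le_left (genericPart_le_orthogonal_inf hg),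
    starProjection_mem_orthogonal_of_le_s15 inf_le_left (genericPart_le_orthogonal_inf_orthogonal hg)⟩

section Consistency

variable (S T : Submodule 𝕜 E) [S.HasOrthogonalProjection] [T.HasOrthogonalProjection]

/-- The constant `ν`. -/
noncomputable def consistencyConstant : ℝ :=
  sInf {r : ℝ | ∃ y ∈ Tᗮ, Sᗮ.starProjection y ≠ 0 ∧
    r = ‖Tᗮ.starProjection (Sᗮ.starProjection y)‖ / ‖Sᗮ.starProjection y‖}

variable {S T}

theorem consistencyConstant_mul_norm_le_of_mem_map {x : E}
    (hx : x ∈ Tᗮ.map (Sᗮ.starProjection : E →ₗ[𝕜] E)) :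
    consistencyConstant S T * ‖x‖ ≤ ‖Tᗮ.starProjection x‖ := by
  obtain ⟨y, hy, rfl⟩ := hx
  change _ * ‖Sᗮ.starProjection y‖ ≤ ‖Tᗮ.starProjection (Sᗮ.starProjection y)‖
  rcases eq_or_ne (Sᗮ.starProjection y) 0 with h0 | h0
  · simp [h0]
  have hle : consistencyConstant S T ≤
      ‖Tᗮ.starProjection (Sᗮ.starProjection y)‖ / ‖Sᗮ.starProjection y‖ :=
    csInf_le ⟨0, by rintro r ⟨_, _, _, rfl⟩; positivity⟩ ⟨y, hy, h0, rfl⟩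
  rwa [le_div_iff₀ (norm_pos_iff.mpr h0)] at hle

theorem mem_closure_map_starProjection [CompleteSpace E] {u : E} (huS : u ∈ Sᗮ)
    (huB : u ∈ (Sᗮ ⊓ T)ᗮ) :
    u ∈ (Tᗮ.map (Sᗮ.starProjection : E →ₗ[𝕜] E)).topologicalClosure := by
  rw [← orthogonal_orthogonal_eq_closure]
  intro z hz
  have hPz : Sᗮ.starProjection z ∈ Sᗮ ⊓ T := by
    refine mem_inf.mpr ⟨starProjection_apply_mem _ z, ?_⟩
    rw [← T.orthogonal_orthogonal]
    intro y hy
    rw [← inner_starProjection_left_eq_right]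
    exact hz _ ⟨y, hy, rfl⟩
  rw [← starProjection_eq_self_iff.mpr huS, ← inner_starProjection_left_eq_right]
  exact huB _ hPz

/-- The infimum defining `ν` only sees `P_{S⊥}(T⊥)`; the bound extends to its closure, which
contains `S⊥ ∩ (S⊥ ∩ T)⊥`. -/
theorem consistencyConstant_mul_norm_le [CompleteSpace E] {u : E} (huS : u ∈ Sᗮ)
    (huB : u ∈ (Sᗮ ⊓ T)ᗮ) : consistencyConstant S T * ‖u‖ ≤ ‖Tᗮ.starProjection u‖ := by
  have hclosed : IsClosed {x : E | consistencyConstant S T * ‖x‖ ≤ ‖Tᗮ.starProjection x‖} :=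
    isClosed_le (continuous_const.mul continuous_norm)
      (continuous_norm.comp (Tᗮ.starProjection).continuous)
  have hu := mem_closure_map_starProjection huS huB
  rw [← SetLike.mem_coe, topologicalClosure_coe] at hu
  exact closure_minimal (fun x hx => consistencyConstant_mul_norm_le_of_mem_map hx) hclosed hu

theorem norm_le_div_consistencyConstant_sq [CompleteSpace E] (hν : 0 < consistencyConstant S T)
    {u g : E} (huS : u ∈ Sᗮ) (huB : u ∈ (Sᗮ ⊓ T)ᗮ)
    (h : Sᗮ.starProjection (Tᗮ.starProjection u) = -Sᗮ.starProjection (Tᗮ.starProjection g)) :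
    ‖u‖ ≤ ‖Sᗮ.starProjection (Tᗮ.starProjection g)‖ / consistencyConstant S T ^ 2 := by
  rw [le_div_iff₀ (by positivity)]
  have hlow := consistencyConstant_mul_norm_le huS huB
  have hup := norm_sq_starProjection_le_of_eq_neg huS h
  rcases (norm_nonneg u).eq_or_lt with hu | hu
  · rw [← hu, zero_mul]; positivity
  nlinarith [mul_le_mul hlow hlow (by positivity) (norm_nonneg _)]

theorem norm_le_div_consistencyConstant [CompleteSpace E] (hν : 0 < consistencyConstant S T)
    {u g : E} (huS : u ∈ Sᗮ) (huB : u ∈ (Sᗮ ⊓ T)ᗮ)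
    (h : Sᗮ.starProjection (Tᗮ.starProjection u) = -Sᗮ.starProjection (Tᗮ.starProjection g)) :
    ‖u‖ ≤ ‖Tᗮ.starProjection g‖ / consistencyConstant S T := by
  rw [le_div_iff₀ hν, mul_comm]
  exact (consistencyConstant_mul_norm_le huS huB).trans (norm_starProjection_le_of_eq_neg huS h)

theorem starProjection_orthogonal_eq_add_starProjection_genericPart [CompleteSpace E] (f : E) :
    Sᗮ.starProjection f = (Sᗮ ⊓ T).starProjection f + (Sᗮ ⊓ Tᗮ).starProjection f +
      Sᗮ.starProjection ((genericPart S T).starProjection f) := by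
  have hS := S.le_orthogonal_orthogonal
  have hT := T.le_orthogonal_orthogonal
  have hK : S ⊓ T ⊔ Sᗮ ⊓ T ⊔ S ⊓ Tᗮ ⊔ Sᗮ ⊓ Tᗮ ≤ LinearMap.ker
      ((Sᗮ.starProjection - (Sᗮ ⊓ T).starProjection - (Sᗮ ⊓ Tᗮ).starProjection : E →L[𝕜] E) :
        E →ₗ[𝕜] E) := by
    refine sup_le (sup_le (sup_le ?_ ?_) ?_) ?_ <;> intro v hv <;>
      obtain ⟨hv₁, hv₂⟩ := mem_inf.mp hv <;>
      simp only [LinearMap.mem_ker, ContinuousLinearMap.coe_coe, FunLike.coe_sub, Pi.sub_apply,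
        sub_eq_zero]
    · simp [(starProjection_apply_eq_zero_iff _).mpr (hS hv₁),
        (starProjection_apply_eq_zero_iff _).mpr (orthogonal_le inf_le_left (hS hv₁))]
    · simp [starProjection_eq_self_iff.mpr hv₁, starProjection_eq_self_iff.mpr hv,
        (starProjection_apply_eq_zero_iff _).mpr (orthogonal_le inf_le_right (hT hv₂))]
    · simp [(starProjection_apply_eq_zero_iff _).mpr (hS hv₁),
        (starProjection_apply_eq_zero_iff _).mpr (orthogonal_le inf_le_left (hS hv₁))]
    · simp [starProjection_eq_self_iff.mpr hv₁, starProjection_eq_self_iff.mpr hv,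
        (starProjection_apply_eq_zero_iff _).mpr (orthogonal_le inf_le_right hv₂)]
  have hf₀ := map_starProjection_orthogonal _ hK f
  have hf₀K := (genericPart S T).starProjection_apply_mem f
  simp only [FunLike.coe_sub, Pi.sub_apply,
    (starProjection_apply_eq_zero_iff _).mpr (genericPart_le_orthogonal_inf hf₀K),
    (starProjection_apply_eq_zero_iff _).mpr (genericPart_le_orthogonal_inf_orthogonal hf₀K),
    sub_zero] at hf₀
  rw [eq_sub_iff_add_eq, eq_sub_iff_add_eq] at hf₀
  rw [← hf₀]
  abel

theorem starProjection_starProjection_starProjection_genericPart [CompleteSpace E] (f : E) :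
    Sᗮ.starProjection (Tᗮ.starProjection (S.starProjection ((genericPart S T).starProjection f))) =
      Sᗮ.starProjection (Tᗮ.starProjection (S.starProjection f)) := by
  have hS := S.le_orthogonal_orthogonal
  have hT := T.le_orthogonal_orthogonal
  refine map_starProjection_orthogonal
    (Sᗮ.starProjection ∘L Tᗮ.starProjection ∘L S.starProjection) ?_ f
  refine sup_le (sup_le (sup_le ?_ ?_) ?_) ?_ <;> intro v hv <;>
    obtain ⟨hv₁, hv₂⟩ := mem_inf.mp hv <;>
    simp only [LinearMap.mem_ker, ContinuousLinearMap.coe_coe, ContinuousLinearMap.comp_apply]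
  · simp [starProjection_eq_self_iff.mpr hv₁, (starProjection_apply_eq_zero_iff _).mpr (hT hv₂)]
  · simp [(starProjection_apply_eq_zero_iff _).mpr hv₁]
  · simp [starProjection_eq_self_iff.mpr hv₁, starProjection_eq_self_iff.mpr hv₂,
      (starProjection_apply_eq_zero_iff _).mpr (hS hv₁)]
  · simp [(starProjection_apply_eq_zero_iff _).mpr hv₁]

variable {s x : E}

theorem sub_mem_inf_of_consistent {y : E} (hx : x ∈ Sᗮ) (hy : y ∈ Sᗮ)
    (hxs : Sᗮ.starProjection (Tᗮ.starProjection (x + s)) = 0)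
    (hys : Sᗮ.starProjection (Tᗮ.starProjection (y + s)) = 0) : x - y ∈ Sᗮ ⊓ T := by
  have h : Sᗮ.starProjection (Tᗮ.starProjection (x - y)) = 0 := by
    rw [← add_sub_add_right_eq_sub x y s, map_sub, map_sub, hxs, hys, sub_zero]
  have hT := mem_orthogonal_of_mem_of_starProjection_starProjection_eq_zero (sub_mem hx hy) h
  exact mem_inf.mpr ⟨sub_mem hx hy, T.orthogonal_orthogonal ▸ hT⟩

theorem mem_orthogonal_inf_orthogonal_of_consistent (hs : s ∈ S)
    (hxs : Sᗮ.starProjection (Tᗮ.starProjection (x + s)) = 0) : x ∈ (Sᗮ ⊓ Tᗮ)ᗮ := by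
  have hsD : s ∈ (Sᗮ ⊓ Tᗮ)ᗮ := orthogonal_le inf_le_left (S.le_orthogonal_orthogonal hs)
  simpa using sub_mem (mem_orthogonal_inf_of_starProjection_starProjection_eq_zero hxs) hsD

/-- Removing the `(S⊥ ∩ T)`-component of a solution gives a solution of smaller norm. -/
theorem mem_orthogonal_inf_of_minimal [CompleteSpace E] (hx : x ∈ Sᗮ)
    (hxs : Sᗮ.starProjection (Tᗮ.starProjection (x + s)) = 0)
    (hmin : ∀ y ∈ Sᗮ, Sᗮ.starProjection (Tᗮ.starProjection (y + s)) = 0 → ‖x‖ ≤ ‖y‖) :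
    x ∈ (Sᗮ ⊓ T)ᗮ := by
  have hb := (Sᗮ ⊓ T).starProjection_apply_mem x
  have hQb : Tᗮ.starProjection ((Sᗮ ⊓ T).starProjection x) = 0 :=
    (starProjection_apply_eq_zero_iff _).mpr (T.le_orthogonal_orthogonal (mem_inf.mp hb).2)
  refine mem_orthogonal_of_norm_le_norm_starProjection_orthogonal (hmin _ ?_ ?_)
  · rw [starProjection_orthogonal_val (K := Sᗮ ⊓ T)]
    exact sub_mem hx (mem_inf.mp hb).1
  · rw [starProjection_orthogonal_val (K := Sᗮ ⊓ T), sub_add_eq_add_sub, map_sub, hQb, sub_zero,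
      hxs]

theorem starProjection_starProjection_sub_eq_neg [CompleteSpace E] {f : E}
    (hxs : Sᗮ.starProjection (Tᗮ.starProjection (x + S.starProjection f)) = 0) :
    Sᗮ.starProjection
        (Tᗮ.starProjection (x - Sᗮ.starProjection ((genericPart S T).starProjection f))) =
      -Sᗮ.starProjection (Tᗮ.starProjection ((genericPart S T).starProjection f)) := by
  set f₀ := (genericPart S T).starProjection f
  have h : x + S.starProjection f₀ = x - Sᗮ.starProjection f₀ + f₀ := by
    rw [starProjection_orthogonal_val (K := S)]
    abel
  rw [map_add, map_add, ← starProjection_starProjection_starProjection_genericPart (T := T),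
    ← map_add, ← map_add, h, map_add, map_add] at hxs
  exact eq_neg_of_add_eq_zero_left hxs

theorem starProjection_orthogonal_inf_sub_eq [CompleteSpace E] {f fhat : E}
    (hconsist : S.starProjection fhat = S.starProjection f)
    (hfhat : Sᗮ.starProjection (Tᗮ.starProjection fhat) = 0) (hx : x ∈ Sᗮ)
    (hxs : Sᗮ.starProjection (Tᗮ.starProjection (x + S.starProjection f)) = 0)
    (hxB : x ∈ (Sᗮ ⊓ T)ᗮ) :
    (Sᗮ ⊓ T)ᗮ.starProjection (fhat - f) =
      x - Sᗮ.starProjection ((genericPart S T).starProjection f) - (Sᗮ ⊓ Tᗮ).starProjection f := by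
  set y := Sᗮ.starProjection fhat
  have hfhat_eq : fhat = S.starProjection f + y := by
    rw [← hconsist, S.starProjection_add_starProjection_orthogonal]
  have hyx : y - x ∈ Sᗮ ⊓ T :=
    sub_mem_inf_of_consistent (starProjection_apply_mem _ _) hx (by rwa [add_comm, ← hfhat_eq]) hxs
  have hDB : (Sᗮ ⊓ Tᗮ).starProjection f ∈ (Sᗮ ⊓ T)ᗮ :=
    orthogonal_le inf_le_right (mem_inf.mp ((Sᗮ ⊓ Tᗮ).starProjection_apply_mem f)).2
  have hf₀B := (mem_inf.mp (starProjection_orthogonal_mem_of_mem_genericPart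
    (starProjection_apply_mem (genericPart S T) f))).1
  refine eq_starProjection_of_mem_orthogonal' (z := y - x - (Sᗮ ⊓ T).starProjection f)
    (sub_mem (sub_mem hxB hf₀B) hDB) ?_ ?_
  · exact le_orthogonal_orthogonal _ (sub_mem hyx (starProjection_apply_mem _ f))
  · have hf : f = S.starProjection f + Sᗮ.starProjection f :=
      (S.starProjection_add_starProjection_orthogonal f).symm
    calc fhat - f = S.starProjection f + y - (S.starProjection f + Sᗮ.starProjection f) := by
          rw [← hf, ← hfhat_eq]
      _ = _ := by
          rw [starProjection_orthogonal_eq_add_starProjection_genericPart (T := T) f]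
          abel

end Consistency

end Submodule

/-- with `ν := inf {‖P_{T⊥} x‖/‖x‖ : x ∈ P_{S⊥}(T⊥), x ≠ 0} > 0`, `xn` the
minimal-norm element of `{x ∈ S⊥ : P_{S⊥} P_{T⊥}(x + P_S f) = 0}`, `fhat` any sample consistent
reconstruction of `f`, and `M` the orthogonal projection onto `(S⊥ ∩ T)⊥`, one has
`‖M(fhat − f)‖² = ‖P_{S⊥∩T⊥} f‖² + ‖xn − P_{S⊥} P₀ f‖²`, together with the sharp bounds
`‖xn − P_{S⊥} P₀ f‖ ≤ ‖P_{S⊥} P_{T⊥} P₀ f‖/ν²` and `‖xn − P_{S⊥} P₀ f‖ ≤ ‖P_{T⊥} P₀ f‖/ν`. -/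
theorem stmt_15 {𝕜 H : Type*} [RCLike 𝕜] [NormedAddCommGroup H] [InnerProductSpace 𝕜 H]
    [CompleteSpace H] (S T : Submodule 𝕜 H)
    [Submodule.HasOrthogonalProjection S] [Submodule.HasOrthogonalProjection T]
    [Submodule.HasOrthogonalProjection (Sᗮ ⊓ Tᗮ)]
    (ν : ℝ)
    (hν : ν = sInf {r : ℝ | ∃ y ∈ Tᗮ, (Submodule.orthogonalProjectionOnto Sᗮ y : H) ≠ 0 ∧
      r = ‖(Submodule.orthogonalProjectionOnto Tᗮ ((Submodule.orthogonalProjectionOnto Sᗮ y : H)) : H)‖ /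
        ‖(Submodule.orthogonalProjectionOnto Sᗮ y : H)‖})
    (hνpos : 0 < ν) (f : H) (xn : H)
    (hxn : xn ∈ Sᗮ ∧
      (Submodule.orthogonalProjectionOnto Sᗮ ((xn + (Submodule.orthogonalProjectionOnto S f : H)) -
        (Submodule.orthogonalProjectionOnto T (xn + (Submodule.orthogonalProjectionOnto S f : H)) : H)) : H) = 0 ∧
      ∀ x : H, x ∈ Sᗮ →
        (Submodule.orthogonalProjectionOnto Sᗮ ((x + (Submodule.orthogonalProjectionOnto S f : H)) -
          (Submodule.orthogonalProjectionOnto T (x + (Submodule.orthogonalProjectionOnto S f : H)) : H)) : H) = 0 →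
        ‖xn‖ ≤ ‖x‖)
    (fhat : H)
    (hconsist : (Submodule.orthogonalProjectionOnto S fhat : H) = (Submodule.orthogonalProjectionOnto S f : H))
    (hmin : (Submodule.orthogonalProjectionOnto Sᗮ (fhat - (Submodule.orthogonalProjectionOnto T fhat : H)) : H) = 0) :
    ‖(Submodule.orthogonalProjectionOnto (Sᗮ ⊓ T)ᗮ (fhat - f) : H)‖ ^ 2 =
      ‖(Submodule.orthogonalProjectionOnto (Sᗮ ⊓ Tᗮ) f : H)‖ ^ 2 +
      ‖xn - (Submodule.orthogonalProjectionOnto Sᗮ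
        ((Submodule.orthogonalProjectionOnto ((S ⊓ T) ⊔ (Sᗮ ⊓ T) ⊔ (S ⊓ Tᗮ) ⊔ (Sᗮ ⊓ Tᗮ))ᗮ f : H)) : H)‖ ^ 2 ∧
    ‖xn - (Submodule.orthogonalProjectionOnto Sᗮ
        ((Submodule.orthogonalProjectionOnto ((S ⊓ T) ⊔ (Sᗮ ⊓ T) ⊔ (S ⊓ Tᗮ) ⊔ (Sᗮ ⊓ Tᗮ))ᗮ f : H)) : H)‖ ≤
      ‖(Submodule.orthogonalProjectionOnto Sᗮ ((Submodule.orthogonalProjectionOnto Tᗮ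
        ((Submodule.orthogonalProjectionOnto ((S ⊓ T) ⊔ (Sᗮ ⊓ T) ⊔ (S ⊓ Tᗮ) ⊔ (Sᗮ ⊓ Tᗮ))ᗮ f : H)) : H)) : H)‖ /
        ν ^ 2 ∧
    ‖xn - (Submodule.orthogonalProjectionOnto Sᗮ
        ((Submodule.orthogonalProjectionOnto ((S ⊓ T) ⊔ (Sᗮ ⊓ T) ⊔ (S ⊓ Tᗮ) ⊔ (Sᗮ ⊓ Tᗮ))ᗮ f : H)) : H)‖ ≤
      ‖(Submodule.orthogonalProjectionOnto Tᗮ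
        ((Submodule.orthogonalProjectionOnto ((S ⊓ T) ⊔ (Sᗮ ⊓ T) ⊔ (S ⊓ Tᗮ) ⊔ (Sᗮ ⊓ Tᗮ))ᗮ f : H)) : H)‖ / ν := by
  simp only [Submodule.coe_orthogonalProjectionOnto_apply,
    ← Submodule.starProjection_orthogonal_val] at hν hxn hconsist hmin ⊢
  subst hν
  have : (Sᗮ ⊓ T).HasOrthogonalProjection := Submodule.hasOrthogonalProjection_inf Sᗮ T
  obtain ⟨hxnS, hxns, hxn_min⟩ := hxn
  have hxnB := Submodule.mem_orthogonal_inf_of_minimal hxnS hxns hxn_min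
  have hxnD := Submodule.mem_orthogonal_inf_orthogonal_of_consistent
    (Submodule.starProjection_apply_mem S f) hxns
  set f₀ := (Submodule.genericPart S T).starProjection f
  obtain ⟨hf₀B, hf₀D⟩ := Submodule.mem_inf.mp
    (Submodule.starProjection_orthogonal_mem_of_mem_genericPart
      (Submodule.starProjection_apply_mem (Submodule.genericPart S T) f))
  have huS := sub_mem hxnS (Submodule.starProjection_apply_mem Sᗮ f₀)
  have hPQu := Submodule.starProjection_starProjection_sub_eq_neg hxns
  refine ⟨?_, Submodule.norm_le_div_consistencyConstant_sq hνpos huS (sub_mem hxnB hf₀B) hPQu,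
    Submodule.norm_le_div_consistencyConstant hνpos huS (sub_mem hxnB hf₀B) hPQu⟩
  have h_orth := inner_eq_zero_symm.mp
    (sub_mem hxnD hf₀D _ (Submodule.starProjection_apply_mem _ f))
  rw [Submodule.starProjection_orthogonal_inf_sub_eq hconsist hmin hxnS hxns hxnB,
    norm_sub_sq (𝕜 := 𝕜), h_orth, map_zero, mul_zero, sub_zero, add_comm]
end

section
/- Let f ∈ H, let f̂ be a sample consistent reconstruction of f, and set t̂ = P_T f̂. Then t̂ ∈ T, t̂ satisfies P_T P_S (t̂ − f) = 0 (i.e., t̂ is a strictly guided reconstruction of f), and t̂ − (f − P_{S∩T⊥} f) ∈ S⊥, i.e., t̂ is the oblique projection of the reduced signal f − P_{S∩T⊥} f onto T along S⊥ (equivalently, P_S t̂ = P_S f − P_{S∩T⊥} f). -/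
/-!
Write `t = P_T f̂` and `r = f̂ - t`. Then `r ∈ T⊥` always, and the second consistency condition says
`r ∈ S`, so `r ∈ S ∩ T⊥`. The first one says `f - f̂ ∈ S⊥`, hence `f - r = (f - f̂) + t ∈ S⊥ + T`,
which is orthogonal to `S ∩ T⊥`; therefore `r = P_{S∩T⊥} f`. All three claims follow:
`t - (f - r) = f̂ - f ∈ S⊥`, and applying `P_S` gives `P_S (t - f) = -r ∈ T⊥`.
-/

namespace Submodule

variable {𝕜 E : Type*} [RCLike 𝕜] [NormedAddCommGroup E] [InnerProductSpace 𝕜 E]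

theorem sub_mem_orthogonal_of_starProjection_eq {K : Submodule 𝕜 E} [K.HasOrthogonalProjection]
    {x y : E} (h : K.starProjection x = K.starProjection y) : x - y ∈ Kᗮ :=
  (starProjection_apply_eq_zero_iff _).mp (by rw [map_sub, h, sub_self])

theorem mem_of_starProjection_orthogonal_eq_zero {K : Submodule 𝕜 E} [K.HasOrthogonalProjection]
    {v : E} (h : Kᗮ.starProjection v = 0) : v ∈ K :=
  K.orthogonal_orthogonal ▸ (starProjection_apply_eq_zero_iff _).mp h

theorem le_orthogonal_inf_orthogonal (S T : Submodule 𝕜 E) : T ≤ (S ⊓ Tᗮ)ᗮ :=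
  T.le_orthogonal_orthogonal.trans (orthogonal_le inf_le_right)

theorem starProjection_inf_orthogonal_eq {S T : Submodule 𝕜 E} [(S ⊓ Tᗮ).HasOrthogonalProjection]
    {f r s t : E} (hr : r ∈ S ⊓ Tᗮ) (hs : s ∈ Sᗮ) (ht : t ∈ T) (hf : f = r + s + t) :
    (S ⊓ Tᗮ).starProjection f = r := by
  refine eq_starProjection_of_mem_orthogonal hr ?_
  rw [hf, add_assoc, add_sub_cancel_left]
  exact add_mem (orthogonal_le inf_le_left hs) (le_orthogonal_inf_orthogonal S T ht)

variable {S T : Submodule 𝕜 E} [S.HasOrthogonalProjection] [T.HasOrthogonalProjection]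

theorem sub_starProjection_mem_inf_orthogonal {fhat : E}
    (hmin : Sᗮ.starProjection (fhat - T.starProjection fhat) = 0) :
    fhat - T.starProjection fhat ∈ S ⊓ Tᗮ :=
  ⟨mem_of_starProjection_orthogonal_eq_zero hmin, sub_starProjection_mem_orthogonal fhat⟩

theorem starProjection_inf_orthogonal_eq_sub_starProjection [(S ⊓ Tᗮ).HasOrthogonalProjection]
    {f fhat : E} (hconsist : S.starProjection fhat = S.starProjection f)
    (hmin : Sᗮ.starProjection (fhat - T.starProjection fhat) = 0) :
    (S ⊓ Tᗮ).starProjection f = fhat - T.starProjection fhat :=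
  starProjection_inf_orthogonal_eq (sub_starProjection_mem_inf_orthogonal hmin)
    (sub_mem_orthogonal_of_starProjection_eq hconsist.symm) (starProjection_apply_mem T fhat)
    (by abel)

end Submodule

open Submodule

theorem stmt_16_general {𝕜 H : Type*} [RCLike 𝕜] [NormedAddCommGroup H] [InnerProductSpace 𝕜 H]
    (S T : Submodule 𝕜 H)
    [Submodule.HasOrthogonalProjection S] [Submodule.HasOrthogonalProjection T]
    [Submodule.HasOrthogonalProjection (S ⊓ Tᗮ)]
    (f fhat : H)
    (hconsist : (Submodule.orthogonalProjectionOnto S fhat : H) = (Submodule.orthogonalProjectionOnto S f : H))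
    (hmin : (Submodule.orthogonalProjectionOnto Sᗮ (fhat - (Submodule.orthogonalProjectionOnto T fhat : H)) : H) = 0) :
    (Submodule.orthogonalProjectionOnto T fhat : H) ∈ T ∧
    (Submodule.orthogonalProjectionOnto T
      ((Submodule.orthogonalProjectionOnto S ((Submodule.orthogonalProjectionOnto T fhat : H) - f) : H)) : H) = 0 ∧
    (Submodule.orthogonalProjectionOnto T fhat : H) - (f - (Submodule.orthogonalProjectionOnto (S ⊓ Tᗮ) f : H)) ∈ Sᗮ ∧
    (Submodule.orthogonalProjectionOnto S ((Submodule.orthogonalProjectionOnto T fhat : H)) : H) =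
      (Submodule.orthogonalProjectionOnto S f : H) - (Submodule.orthogonalProjectionOnto (S ⊓ Tᗮ) f : H) := by
  simp only [coe_orthogonalProjectionOnto_apply] at hconsist hmin ⊢
  set t := T.starProjection fhat
  have hr := sub_starProjection_mem_inf_orthogonal hmin
  have hproj := starProjection_inf_orthogonal_eq_sub_starProjection hconsist hmin
  have hreduced : t - (f - (S ⊓ Tᗮ).starProjection f) ∈ Sᗮ := by
    rw [hproj, show t - (f - (fhat - t)) = fhat - f by abel]
    exact sub_mem_orthogonal_of_starProjection_eq hconsist
  have hPSt : S.starProjection t = S.starProjection f - (S ⊓ Tᗮ).starProjection f := by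
    have h := (starProjection_apply_eq_zero_iff _).mpr hreduced
    rw [map_sub, map_sub, hproj, starProjection_eq_self_iff.mpr hr.1] at h
    rw [hproj]
    exact sub_eq_zero.mp h
  refine ⟨starProjection_apply_mem T fhat, ?_, hreduced, hPSt⟩
  rw [starProjection_apply_eq_zero_iff T, map_sub, hPSt, hproj, sub_sub_cancel_left]
  exact neg_mem hr.2

/-- if `fhat` is a sample consistent reconstruction of `f` and `that = P_T fhat`,
then `that ∈ T`, `P_T P_S (that − f) = 0` (`that` is a strictly guided reconstruction of `f`),
and `that − (f − P_{S∩T⊥} f) ∈ S⊥`, i.e. `P_S that = P_S f − P_{S∩T⊥} f`. -/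
theorem stmt_16 {𝕜 H : Type*} [RCLike 𝕜] [NormedAddCommGroup H] [InnerProductSpace 𝕜 H]
    [CompleteSpace H] (S T : Submodule 𝕜 H)
    [Submodule.HasOrthogonalProjection S] [Submodule.HasOrthogonalProjection T]
    [Submodule.HasOrthogonalProjection (S ⊓ Tᗮ)]
    (f fhat : H)
    (hconsist : (Submodule.orthogonalProjectionOnto S fhat : H) = (Submodule.orthogonalProjectionOnto S f : H))
    (hmin : (Submodule.orthogonalProjectionOnto Sᗮ (fhat - (Submodule.orthogonalProjectionOnto T fhat : H)) : H) = 0) :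
    (Submodule.orthogonalProjectionOnto T fhat : H) ∈ T ∧
    (Submodule.orthogonalProjectionOnto T
      ((Submodule.orthogonalProjectionOnto S ((Submodule.orthogonalProjectionOnto T fhat : H) - f) : H)) : H) = 0 ∧
    (Submodule.orthogonalProjectionOnto T fhat : H) - (f - (Submodule.orthogonalProjectionOnto (S ⊓ Tᗮ) f : H)) ∈ Sᗮ ∧
    (Submodule.orthogonalProjectionOnto S ((Submodule.orthogonalProjectionOnto T fhat : H)) : H) =
      (Submodule.orthogonalProjectionOnto S f : H) - (Submodule.orthogonalProjectionOnto (S ⊓ Tᗮ) f : H) :=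
  stmt_16_general S T f fhat hconsist hmin
end

section
/- Let f ∈ H, let f̂ be a sample consistent reconstruction of f, let 0 < α ≤ 1, let ρ = (1 − α)/α, and set f̂_α = α f̂ + (1 − α) P_T f̂. Then f̂_α satisfies the regularized reconstruction equation (P_S + ρ P_{T⊥}) f̂_α = P_S f; in particular, every point of the reconstruction interval between f̂ and P_T f̂ (except the endpoint P_T f̂) solves the regularization problem for the corresponding value of ρ > 0. -/
namespace Submodule

variable {𝕜 H : Type*} [RCLike 𝕜] [NormedAddCommGroup H] [InnerProductSpace 𝕜 H]
  {S T : Submodule 𝕜 H} [S.HasOrthogonalProjection] [T.HasOrthogonalProjection]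

theorem mem_of_starProjection_orthogonal_eq_zero_s17 {v : H} (h : Sᗮ.starProjection v = 0) :
    v ∈ S := by
  rwa [starProjection_apply_eq_zero_iff, orthogonal_orthogonal] at h

theorem starProjection_add_smul_starProjection_orthogonal_of_mem {x : H}
    (hx : Tᗮ.starProjection x ∈ S) {a b c : 𝕜} (hab : a + b = 1) (hca : c * a = b) :
    S.starProjection (a • x + b • T.starProjection x) +
        c • Tᗮ.starProjection (a • x + b • T.starProjection x) =
      S.starProjection x := by
  set w := Tᗮ.starProjection x
  have hTx : T.starProjection x = x - w := by simp [w]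
  have hSw : S.starProjection w = w := starProjection_eq_self_iff.mpr hx
  have hTw : Tᗮ.starProjection (T.starProjection x) = 0 :=
    starProjection_orthogonal_apply_eq_zero (T.starProjection_apply_mem x)
  simp only [map_add, map_smul, hTw, smul_zero, add_zero]
  rw [hTx, map_sub, hSw]
  linear_combination (norm := module) hab • S.starProjection x + hca • w

end Submodule

open Submodule in
theorem stmt_17_general {𝕜 H : Type*} [RCLike 𝕜] [NormedAddCommGroup H] [InnerProductSpace 𝕜 H]
    (S T : Submodule 𝕜 H)
    [Submodule.HasOrthogonalProjection S] [Submodule.HasOrthogonalProjection T]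
    (f fhat : H)
    (hconsist : (Submodule.orthogonalProjectionOnto S fhat : H) = (Submodule.orthogonalProjectionOnto S f : H))
    (hmin : (Submodule.orthogonalProjectionOnto Sᗮ (fhat - (Submodule.orthogonalProjectionOnto T fhat : H)) : H) = 0)
    (α : ℝ) (hα0 : 0 < α) (ρ : ℝ) (hρ : ρ = (1 - α) / α) :
    (Submodule.orthogonalProjectionOnto S
        ((α : 𝕜) • fhat + ((1 - α : ℝ) : 𝕜) • (Submodule.orthogonalProjectionOnto T fhat : H)) : H) +
      ((ρ : ℝ) : 𝕜) • (Submodule.orthogonalProjectionOnto Tᗮ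
        ((α : 𝕜) • fhat + ((1 - α : ℝ) : 𝕜) • (Submodule.orthogonalProjectionOnto T fhat : H)) : H) =
      (Submodule.orthogonalProjectionOnto S f : H) := by
  simp only [coe_orthogonalProjectionOnto_apply] at hconsist hmin ⊢
  rw [← starProjection_orthogonal_val] at hmin
  rw [← hconsist]
  refine starProjection_add_smul_starProjection_orthogonal_of_mem
    (mem_of_starProjection_orthogonal_eq_zero_s17 hmin) (by push_cast; ring) ?_
  rw [← RCLike.ofReal_mul, hρ, div_mul_cancel₀ _ hα0.ne']

/-- if `fhat` is a sample consistent reconstruction of `f`, `0 < α ≤ 1`,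
`ρ = (1 − α)/α` and `fα = α • fhat + (1 − α) • P_T fhat`, then `fα` satisfies the regularized
reconstruction equation `(P_S + ρ P_{T⊥}) fα = P_S f`. -/
theorem stmt_17 {𝕜 H : Type*} [RCLike 𝕜] [NormedAddCommGroup H] [InnerProductSpace 𝕜 H]
    [CompleteSpace H] (S T : Submodule 𝕜 H)
    [Submodule.HasOrthogonalProjection S] [Submodule.HasOrthogonalProjection T]
    (f fhat : H)
    (hconsist : (Submodule.orthogonalProjectionOnto S fhat : H) = (Submodule.orthogonalProjectionOnto S f : H))
    (hmin : (Submodule.orthogonalProjectionOnto Sᗮ (fhat - (Submodule.orthogonalProjectionOnto T fhat : H)) : H) = 0)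
    (α : ℝ) (hα0 : 0 < α) (hα1 : α ≤ 1) (ρ : ℝ) (hρ : ρ = (1 - α) / α) :
    (Submodule.orthogonalProjectionOnto S
        ((α : 𝕜) • fhat + ((1 - α : ℝ) : 𝕜) • (Submodule.orthogonalProjectionOnto T fhat : H)) : H) +
      ((ρ : ℝ) : 𝕜) • (Submodule.orthogonalProjectionOnto Tᗮ
        ((α : 𝕜) • fhat + ((1 - α : ℝ) : 𝕜) • (Submodule.orthogonalProjectionOnto T fhat : H)) : H) =
      (Submodule.orthogonalProjectionOnto S f : H) :=
  stmt_17_general S T f fhat hconsist hmin α hα0 ρ hρ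
end
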